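/- arXiv:2204.01269 — 8 statements merged into one kernel-verified Lean document; each statement's English description precedes it below -/
import Mathlib

section
/- Let D ⊆ ℝⁿ be nonempty, γ > 0, θ̄ : D × D → ℝ, and fix z ∈ D. Suppose p ∈ D minimizes x ↦ θ̄(x,z) + ‖x−z‖²/(2γ) over D (so that g_γ(z) = −θ̄(p,z) − ‖p‖²/(2γ) + ⟨z,p⟩/γ is attained and finite), suppose g_γ(z') < ∞ for every z' ∈ D, and let c ∈ ℝⁿ satisfy −θ̄(p,z') ≥ −θ̄(p,z) + ⟨c, z' − z⟩ for all z' ∈ D. Then g_γ(z') ≥ g_γ(z) + ⟨ p/γ + c, z' − z ⟩ for all z' ∈ D; that is, p/γ + c is a subgradient of g_γ at z over D. -/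
open scoped RealInnerProductSpace

theorem stmt5 {n : ℕ}
    (D : Set (EuclideanSpace ℝ (Fin n))) (hDne : D.Nonempty)
    (γ : ℝ) (hγ : 0 < γ)
    (θb : EuclideanSpace ℝ (Fin n) → EuclideanSpace ℝ (Fin n) → ℝ)
    (z : EuclideanSpace ℝ (Fin n)) (hz : z ∈ D)
    (p : EuclideanSpace ℝ (Fin n)) (hp : p ∈ D)
    (hpmin : ∀ x ∈ D, θb p z + ‖p - z‖ ^ 2 / (2 * γ) ≤ θb x z + ‖x - z‖ ^ 2 / (2 * γ))
    (gγ : EuclideanSpace ℝ (Fin n) → ℝ)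
    (hg : ∀ w : EuclideanSpace ℝ (Fin n),
      gγ w = sSup ((fun x => -θb x w - ‖x‖ ^ 2 / (2 * γ) + ⟪w, x⟫ / γ) '' D))
    (hbdd : ∀ w ∈ D, BddAbove ((fun x => -θb x w - ‖x‖ ^ 2 / (2 * γ) + ⟪w, x⟫ / γ) '' D))
    (c : EuclideanSpace ℝ (Fin n))
    (hc : ∀ z' ∈ D, -θb p z' ≥ -θb p z + ⟪c, z' - z⟫) :
    ∀ z' ∈ D, gγ z' ≥ gγ z + ⟪(1 / γ) • p + c, z' - z⟫ := by
  intro z' hz'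
  -- gγ z equals the value at p
  have key : ∀ x, ‖x - z‖ ^ 2 = ‖x‖ ^ 2 - 2 * ⟪x, z⟫ + ‖z‖ ^ 2 := by
    intro x
    rw [norm_sub_sq_real]
  have hfp : ∀ x ∈ D, -θb x z - ‖x‖ ^ 2 / (2 * γ) + ⟪z, x⟫ / γ ≤
      -θb p z - ‖p‖ ^ 2 / (2 * γ) + ⟪z, p⟫ / γ := by
    intro x hx
    have h := hpmin x hx
    rw [key x, key p] at h
    have h1 : ⟪z, x⟫ = ⟪x, z⟫ := real_inner_comm x z
    have h2 : ⟪z, p⟫ = ⟪p, z⟫ := real_inner_comm p z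
    rw [h1, h2]
    have hγ' : γ ≠ 0 := ne_of_gt hγ
    have idn : ∀ (a : ℝ) (y : EuclideanSpace ℝ (Fin n)),
        -a - ‖y‖ ^ 2 / (2 * γ) + ⟪y, z⟫ / γ =
          -(a + (‖y‖ ^ 2 - 2 * ⟪y, z⟫ + ‖z‖ ^ 2) / (2 * γ)) + ‖z‖ ^ 2 / (2 * γ) := by
      intro a y
      field_simp
      ring
    rw [idn, idn]
    linarith
  have hgz : gγ z = -θb p z - ‖p‖ ^ 2 / (2 * γ) + ⟪z, p⟫ / γ := by
    rw [hg z]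
    apply le_antisymm
    · apply csSup_le (hDne.image _)
      rintro y ⟨x, hx, rfl⟩
      exact hfp x hx
    · exact le_csSup (hbdd z hz) ⟨p, hp, rfl⟩
  have hgz' : gγ z' ≥ -θb p z' - ‖p‖ ^ 2 / (2 * γ) + ⟪z', p⟫ / γ := by
    rw [hg z']
    exact le_csSup (hbdd z' hz') ⟨p, hp, rfl⟩
  have hcc := hc z' hz'
  have hinner : ⟪(1 / γ) • p + c, z' - z⟫ = (⟪z', p⟫ - ⟪z, p⟫) / γ + ⟪c, z' - z⟫ := by
    rw [inner_add_left, real_inner_smul_left, inner_sub_right, inner_sub_right,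
      real_inner_comm z' p, real_inner_comm z p]
    ring
  rw [hgz, hinner]
  have hsd : (⟪z', p⟫ - ⟪z, p⟫) / γ = ⟪z', p⟫ / γ - ⟪z, p⟫ / γ := sub_div _ _ _
  rw [hsd]
  linarith
end

section
/- Let D ⊆ ℝⁿ be nonempty, γ > 0, θ̄ : D × D → ℝ, and fix z ∈ D. Suppose p ∈ D minimizes x ↦ θ̄(x,z) + ‖x−z‖²/(2γ) over D, write e_γθ(z) = θ̄(p,z) + ‖p−z‖²/(2γ) for the attained value, and let c ∈ ℝⁿ satisfy −θ̄(p,z') ≥ −θ̄(p,z) + ⟨c, z' − z⟩ for all z' ∈ D. Define the quadratic surrogate ê(z') = ‖z'‖²/(2γ) − ( ‖z‖²/(2γ) − e_γθ(z) ) − ⟨ p/γ + c, z' − z ⟩. Then the surrogate majorizes the partial Moreau envelope: for every z' ∈ D, θ̄(p,z') + ‖p − z'‖²/(2γ) ≤ ê(z'), and consequently e_γθ(z') = inf_{x∈D} [ θ̄(x,z') + ‖x−z'‖²/(2γ) ] ≤ ê(z'). -/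
open scoped RealInnerProductSpace

theorem stmt6 {n : ℕ}
    (D : Set (EuclideanSpace ℝ (Fin n))) (hDne : D.Nonempty)
    (γ : ℝ) (hγ : 0 < γ)
    (θb : EuclideanSpace ℝ (Fin n) → EuclideanSpace ℝ (Fin n) → ℝ)
    (z : EuclideanSpace ℝ (Fin n)) (hz : z ∈ D)
    (p : EuclideanSpace ℝ (Fin n)) (hp : p ∈ D)
    (hpmin : ∀ x ∈ D, θb p z + ‖p - z‖ ^ 2 / (2 * γ) ≤ θb x z + ‖x - z‖ ^ 2 / (2 * γ))
    (c : EuclideanSpace ℝ (Fin n))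
    (hc : ∀ z' ∈ D, -θb p z' ≥ -θb p z + ⟪c, z' - z⟫)
    (ehat : EuclideanSpace ℝ (Fin n) → ℝ)
    (hehat : ∀ z' : EuclideanSpace ℝ (Fin n),
      ehat z' = ‖z'‖ ^ 2 / (2 * γ)
        - (‖z‖ ^ 2 / (2 * γ) - (θb p z + ‖p - z‖ ^ 2 / (2 * γ)))
        - ⟪(1 / γ) • p + c, z' - z⟫) :
    ∀ z' ∈ D,
      θb p z' + ‖p - z'‖ ^ 2 / (2 * γ) ≤ ehat z' ∧
      (⨅ x ∈ D, ((θb x z' + ‖x - z'‖ ^ 2 / (2 * γ) : ℝ) : EReal)) ≤ (ehat z' : EReal) := by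
  intro z' hz'
  have h1 : θb p z' ≤ θb p z - ⟪c, z' - z⟫ := by
    have := hc z' hz'
    linarith
  have key : ‖p - z'‖ ^ 2 = ‖p - z‖ ^ 2 + ‖z'‖ ^ 2 - ‖z‖ ^ 2 - 2 * ⟪p, z' - z⟫ := by
    have hc1 := real_inner_comm p z'
    have hc2 := real_inner_comm p z
    simp only [← real_inner_self_eq_norm_sq, inner_sub_left, inner_sub_right]
    linarith
  have key2 : ‖p - z'‖ ^ 2 / (2 * γ)
      = ‖p - z‖ ^ 2 / (2 * γ) + ‖z'‖ ^ 2 / (2 * γ) - ‖z‖ ^ 2 / (2 * γ)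
        - (1 / γ) * ⟪p, z' - z⟫ := by
    rw [key]; field_simp
  have hinner : ⟪(1 / γ) • p + c, z' - z⟫ = (1 / γ) * ⟪p, z' - z⟫ + ⟪c, z' - z⟫ := by
    rw [inner_add_left, real_inner_smul_left]
  have hmain : θb p z' + ‖p - z'‖ ^ 2 / (2 * γ) ≤ ehat z' := by
    rw [hehat z', hinner]
    linarith
  refine ⟨hmain, ?_⟩
  refine le_trans ?_ (EReal.coe_le_coe_iff.mpr hmain)
  exact iInf₂_le p hp
end

section
/- Let D ⊆ ℝⁿ be nonempty convex, γ > 0, and θ̄ : D × D → ℝ such that z ↦ θ̄(x,z) is concave on D for every x ∈ D. Assume g_γ(z) = sup_{x∈D} [ −θ̄(x,z) − ‖x‖²/(2γ) + ⟨z,x⟩/γ ] is finite for every z ∈ D. Then g_γ is convex on D, and the partial Moreau envelope admits the difference-of-convex decomposition e_γθ(z) = ‖z‖²/(2γ) − g_γ(z) for every z ∈ D, where e_γθ(z) = inf_{x∈D} [ θ̄(x,z) + ‖x−z‖²/(2γ) ]. -/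
open scoped RealInnerProductSpace

theorem stmt7 {n : ℕ}
    (D : Set (EuclideanSpace ℝ (Fin n))) (hDne : D.Nonempty) (hDconv : Convex ℝ D)
    (γ : ℝ) (hγ : 0 < γ)
    (θb : EuclideanSpace ℝ (Fin n) → EuclideanSpace ℝ (Fin n) → ℝ)
    (hconc : ∀ x ∈ D, ConcaveOn ℝ D (fun z => θb x z))
    (gγ : EuclideanSpace ℝ (Fin n) → ℝ)
    (hg : ∀ z : EuclideanSpace ℝ (Fin n),
      gγ z = sSup ((fun x => -θb x z - ‖x‖ ^ 2 / (2 * γ) + ⟪z, x⟫ / γ) '' D))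
    (hbdd : ∀ z ∈ D, BddAbove ((fun x => -θb x z - ‖x‖ ^ 2 / (2 * γ) + ⟪z, x⟫ / γ) '' D)) :
    ConvexOn ℝ D gγ ∧
    ∀ z ∈ D, sInf ((fun x => θb x z + ‖x - z‖ ^ 2 / (2 * γ)) '' D)
      = ‖z‖ ^ 2 / (2 * γ) - gγ z := by
  have hγ0 : γ ≠ 0 := ne_of_gt hγ
  constructor
  · refine ⟨hDconv, ?_⟩
    intro z1 hz1 z2 hz2 a b ha hb hab
    have hb' : b = 1 - a := by linarith
    subst hb'
    have hw : a • z1 + (1 - a) • z2 ∈ D := hDconv hz1 hz2 ha hb hab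
    rw [hg (a • z1 + (1 - a) • z2)]
    apply csSup_le (hDne.image _)
    rintro _ ⟨x, hx, rfl⟩
    have h1 : a * θb x z1 + (1 - a) * θb x z2 ≤ θb x (a • z1 + (1 - a) • z2) := by
      have := (hconc x hx).2 hz1 hz2 ha hb hab
      simpa [smul_eq_mul] using this
    have hinner : ⟪a • z1 + (1 - a) • z2, x⟫ = a * ⟪z1, x⟫ + (1 - a) * ⟪z2, x⟫ := by
      rw [inner_add_left, real_inner_smul_left, real_inner_smul_left]
    have hs1 : -θb x z1 - ‖x‖ ^ 2 / (2 * γ) + ⟪z1, x⟫ / γ ≤ gγ z1 := by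
      rw [hg z1]
      exact le_csSup (hbdd z1 hz1) ⟨x, hx, rfl⟩
    have hs2 : -θb x z2 - ‖x‖ ^ 2 / (2 * γ) + ⟪z2, x⟫ / γ ≤ gγ z2 := by
      rw [hg z2]
      exact le_csSup (hbdd z2 hz2) ⟨x, hx, rfl⟩
    have step : -θb x (a • z1 + (1 - a) • z2) - ‖x‖ ^ 2 / (2 * γ)
        + ⟪a • z1 + (1 - a) • z2, x⟫ / γ
        ≤ a * (-θb x z1 - ‖x‖ ^ 2 / (2 * γ) + ⟪z1, x⟫ / γ)
          + (1 - a) * (-θb x z2 - ‖x‖ ^ 2 / (2 * γ) + ⟪z2, x⟫ / γ) := by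
      rw [hinner]
      have e1 : (a * ⟪z1, x⟫ + (1 - a) * ⟪z2, x⟫) / γ
          = a * (⟪z1, x⟫ / γ) + (1 - a) * (⟪z2, x⟫ / γ) := by ring
      rw [e1]
      nlinarith [h1]
    have hA := mul_le_mul_of_nonneg_left hs1 ha
    have hB := mul_le_mul_of_nonneg_left hs2 hb
    simp only [smul_eq_mul]
    linarith
  · intro z hz
    set S := (fun x => -θb x z - ‖x‖ ^ 2 / (2 * γ) + ⟪z, x⟫ / γ) '' D with hS
    have hSne : S.Nonempty := hDne.image _
    have hSbdd : BddAbove S := hbdd z hz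
    set c := ‖z‖ ^ 2 / (2 * γ) with hc
    have himg : ((fun x => θb x z + ‖x - z‖ ^ 2 / (2 * γ)) '' D)
        = (fun t => c - t) '' S := by
      rw [hS, Set.image_image]
      apply Set.image_congr
      intro x hx
      have hn : ‖x - z‖ ^ 2 = ‖x‖ ^ 2 - 2 * ⟪x, z⟫ + ‖z‖ ^ 2 := norm_sub_sq_real x z
      have hcomm : ⟪z, x⟫ = ⟪x, z⟫ := real_inner_comm x z
      rw [hn, hcomm, hc]
      field_simp
      ring
    rw [himg, hg z, ← hS]
    have hbelow : BddBelow ((fun t => c - t) '' S) := by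
      refine ⟨c - sSup S, ?_⟩
      rintro _ ⟨t, ht, rfl⟩
      have : t ≤ sSup S := le_csSup hSbdd ht
      simp only
      linarith
    apply le_antisymm
    · have hsup : sSup S ≤ c - sInf ((fun t => c - t) '' S) := by
        apply csSup_le hSne
        intro t ht
        have : sInf ((fun t => c - t) '' S) ≤ c - t :=
          csInf_le hbelow ⟨t, ht, rfl⟩
        linarith
      linarith
    · apply le_csInf (hSne.image _)
      rintro _ ⟨t, ht, rfl⟩
      have : t ≤ sSup S := le_csSup hSbdd ht
      simp only
      linarith
end

section
/- Descent property of one master step (Proposition 4.1(a)): fix γ > 0 and an iterate z ∈ X. For each scenario s = 1,…,S take a subproblem solution (x^s, y^s, c^s) at z with parameter γ and form the surrogate ê_s(x) = ‖x‖²/(2γ) − ( ‖z‖²/(2γ) − e_γψ_s(z) ) − ⟨ x^s/γ + c^s, x − z ⟩, where e_γψ_s(z) = f_s(z,y^s) + ‖x^s − z‖²/(2γ) is the attained optimal value of the subproblem. If x⁺ minimizes x ↦ φ(x) + (1/S) Σ_{s=1}^S ê_s(x) over X, then φ(x⁺) + (1/S) Σ_{s=1}^S e_γψ_s(x⁺)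 ≤ φ(z) + (1/S) Σ_{s=1}^S e_γψ_s(z) − ‖z − x⁺‖²/(2γ). -/
open scoped RealInnerProductSpace

/-- The partial Moreau envelope of the recourse function:
`e_γψ(z) = inf { f(z,y) + ‖x - z‖²/(2γ) : x ∈ X̄, G(x,y) ≤ 0 }`. -/
noncomputable def penv {n₁ n₂ ℓ : ℕ}
    (Xb : Set (EuclideanSpace ℝ (Fin n₁)))
    (f : EuclideanSpace ℝ (Fin n₁) → EuclideanSpace ℝ (Fin n₂) → ℝ)
    (G : EuclideanSpace ℝ (Fin n₁) → EuclideanSpace ℝ (Fin n₂) → Fin ℓ → ℝ)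
    (γ : ℝ) (z : EuclideanSpace ℝ (Fin n₁)) : ℝ :=
  sInf {v : ℝ | ∃ x ∈ Xb, ∃ y : EuclideanSpace ℝ (Fin n₂),
    (∀ i, G x y i ≤ 0) ∧ v = f z y + ‖x - z‖ ^ 2 / (2 * γ)}

lemma norm_combo_sq_aux {E : Type*} [NormedAddCommGroup E] [InnerProductSpace ℝ E]
    (a b : E) (t : ℝ) :
    ‖(1 - t) • a + t • b‖ ^ 2 = (1 - t) * ‖a‖ ^ 2 + t * ‖b‖ ^ 2 - t * (1 - t) * ‖a - b‖ ^ 2 := by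
  have h1 := norm_add_sq_real ((1-t)•a) (t•b)
  have h2 := norm_sub_sq_real a b
  rw [norm_smul, norm_smul, real_inner_smul_left, real_inner_smul_right] at h1
  rw [h1, h2]
  simp only [Real.norm_eq_abs, mul_pow, sq_abs]
  ring

theorem stmt8 {n₁ n₂ ℓ S : ℕ} (hS : 0 < S)
    (φ : EuclideanSpace ℝ (Fin n₁) → ℝ) (hφ : ConvexOn ℝ Set.univ φ)
    (X Xb : Set (EuclideanSpace ℝ (Fin n₁)))
    (hXne : X.Nonempty) (hXconv : Convex ℝ X) (hXcomp : IsCompact X)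
    (hXbne : Xb.Nonempty) (hXbconv : Convex ℝ Xb) (hXbcomp : IsCompact Xb)
    (hXint : X ⊆ interior Xb)
    (f : Fin S → EuclideanSpace ℝ (Fin n₁) → EuclideanSpace ℝ (Fin n₂) → ℝ)
    (hfconc : ∀ s y, ConcaveOn ℝ Set.univ (fun x => f s x y))
    (hfconv : ∀ s x, ConvexOn ℝ Set.univ (fun y => f s x y))
    (G : Fin S → EuclideanSpace ℝ (Fin n₁) → EuclideanSpace ℝ (Fin n₂) → Fin ℓ → ℝ)
    (hG : ∀ s i, ConvexOn ℝ Set.univ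
      (fun p : EuclideanSpace ℝ (Fin n₁) × EuclideanSpace ℝ (Fin n₂) => G s p.1 p.2 i))
    (ψb : Fin S → EuclideanSpace ℝ (Fin n₁) → EuclideanSpace ℝ (Fin n₁) → ℝ)
    (hA : ∀ s, ∀ x ∈ Xb, ∀ z ∈ Xb, ∃ y : EuclideanSpace ℝ (Fin n₂),
      (∀ i, G s x y i ≤ 0) ∧ ψb s x z = f s z y ∧
      ∀ y' : EuclideanSpace ℝ (Fin n₂), (∀ i, G s x y' i ≤ 0) → ψb s x z ≤ f s z y')
    (κ : Fin S → ℝ) (hκ : ∀ s, 0 ≤ κ s)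
    (hB : ∀ s, ∀ z ∈ X, ∀ x₁ ∈ Xb, ∀ x₂ ∈ Xb,
      |ψb s x₁ z - ψb s x₂ z| ≤ κ s * ‖x₁ - x₂‖)
    (γ : ℝ) (hγ : 0 < γ)
    (z : EuclideanSpace ℝ (Fin n₁)) (hz : z ∈ X)
    (xs : Fin S → EuclideanSpace ℝ (Fin n₁))
    (ys : Fin S → EuclideanSpace ℝ (Fin n₂))
    (cs : Fin S → EuclideanSpace ℝ (Fin n₁))
    (hxs : ∀ s, xs s ∈ Xb)
    (hfeas : ∀ s i, G s (xs s) (ys s) i ≤ 0)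
    (hmin : ∀ s, ∀ x ∈ Xb, ∀ y : EuclideanSpace ℝ (Fin n₂), (∀ i, G s x y i ≤ 0) →
      f s z (ys s) + ‖xs s - z‖ ^ 2 / (2 * γ) ≤ f s z y + ‖x - z‖ ^ 2 / (2 * γ))
    (hc : ∀ s, ∀ z' : EuclideanSpace ℝ (Fin n₁),
      -f s z' (ys s) ≥ -f s z (ys s) + ⟪cs s, z' - z⟫)
    (xplus : EuclideanSpace ℝ (Fin n₁)) (hxplusX : xplus ∈ X)
    (hxplus : ∀ x ∈ X,
      φ xplus + (1 / (S : ℝ)) * ∑ s : Fin S,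
        (‖xplus‖ ^ 2 / (2 * γ) - (‖z‖ ^ 2 / (2 * γ) - penv Xb (f s) (G s) γ z)
          - ⟪(1 / γ) • xs s + cs s, xplus - z⟫)
      ≤ φ x + (1 / (S : ℝ)) * ∑ s : Fin S,
        (‖x‖ ^ 2 / (2 * γ) - (‖z‖ ^ 2 / (2 * γ) - penv Xb (f s) (G s) γ z)
          - ⟪(1 / γ) • xs s + cs s, x - z⟫)) :
    φ xplus + (1 / (S : ℝ)) * ∑ s : Fin S, penv Xb (f s) (G s) γ xplus
      ≤ φ z + (1 / (S : ℝ)) * ∑ s : Fin S, penv Xb (f s) (G s) γ z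
        - ‖z - xplus‖ ^ 2 / (2 * γ) := by
  have hγ' : γ ≠ 0 := ne_of_gt hγ
  have hS' : (S : ℝ) ≠ 0 := Nat.cast_ne_zero.mpr hS.ne'
  have hxpXb : xplus ∈ Xb := interior_subset (hXint hxplusX)
  obtain ⟨C, hC⟩ := Metric.isBounded_iff.mp hXbcomp.isBounded
  -- Step A : the value of penv at z is attained at (xs s, ys s)
  have hApen : ∀ s, penv Xb (f s) (G s) γ z
      = f s z (ys s) + ‖xs s - z‖ ^ 2 / (2 * γ) := by
    intro s
    have hmem : f s z (ys s) + ‖xs s - z‖ ^ 2 / (2 * γ) ∈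
        {v : ℝ | ∃ x ∈ Xb, ∃ y : EuclideanSpace ℝ (Fin n₂),
          (∀ i, G s x y i ≤ 0) ∧ v = f s z y + ‖x - z‖ ^ 2 / (2 * γ)} :=
      ⟨xs s, hxs s, ys s, hfeas s, rfl⟩
    have hlb : ∀ w ∈ {v : ℝ | ∃ x ∈ Xb, ∃ y : EuclideanSpace ℝ (Fin n₂),
          (∀ i, G s x y i ≤ 0) ∧ v = f s z y + ‖x - z‖ ^ 2 / (2 * γ)},
        f s z (ys s) + ‖xs s - z‖ ^ 2 / (2 * γ) ≤ w := by
      rintro w ⟨x, hx, y, hy, rfl⟩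
      exact hmin s x hx y hy
    exact le_antisymm (csInf_le ⟨_, hlb⟩ hmem) (le_csInf ⟨_, hmem⟩ hlb)
  -- Step B : penv at xplus is at most the value at the feasible point (xs s, ys s)
  have hBpen : ∀ s, penv Xb (f s) (G s) γ xplus
      ≤ f s xplus (ys s) + ‖xs s - xplus‖ ^ 2 / (2 * γ) := by
    intro s
    apply csInf_le
    · refine ⟨ψb s (xs s) xplus - κ s * C, ?_⟩
      rintro w ⟨x, hx, y, hy, rfl⟩
      obtain ⟨y₀, hy₀, heq, hminψ⟩ := hA s x hx xplus hxpXb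
      have h1 : ψb s x xplus ≤ f s xplus y := hminψ y hy
      have h2 := hB s xplus hxplusX x hx (xs s) (hxs s)
      have h3 : ‖x - xs s‖ ≤ C := by
        have := hC hx (hxs s)
        rwa [dist_eq_norm] at this
      have h2' := abs_le.mp h2
      have h4 : κ s * ‖x - xs s‖ ≤ κ s * C := mul_le_mul_of_nonneg_left h3 (hκ s)
      have h5 : (0:ℝ) ≤ ‖x - xplus‖ ^ 2 / (2 * γ) := by positivity
      linarith [h2'.1, h2'.2]
    · exact ⟨xs s, hxs s, ys s, hfeas s, rfl⟩
  -- Step C : the linearized model overestimates the envelope at xplus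
  have hsub : ∀ s, penv Xb (f s) (G s) γ xplus ≤
      ‖xplus‖ ^ 2 / (2 * γ) - (‖z‖ ^ 2 / (2 * γ) - penv Xb (f s) (G s) γ z)
        - ⟪(1 / γ) • xs s + cs s, xplus - z⟫ := by
    intro s
    have h1 := hBpen s
    have h2 : f s xplus (ys s) ≤ f s z (ys s) - ⟪cs s, xplus - z⟫ := by
      have := hc s xplus; linarith
    have h3 : ‖xs s - xplus‖ ^ 2
        = ‖xs s - z‖ ^ 2 + ‖xplus‖ ^ 2 - ‖z‖ ^ 2 - 2 * ⟪xs s, xplus - z⟫ := by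
      have e1 := norm_sub_sq_real (xs s) xplus
      have e2 := norm_sub_sq_real (xs s) z
      have e3 : ⟪xs s, xplus - z⟫ = ⟪xs s, xplus⟫ - ⟪xs s, z⟫ := inner_sub_right _ _ _
      linarith
    have h4 : ⟪(1 / γ) • xs s + cs s, xplus - z⟫
        = (1 / γ) * ⟪xs s, xplus - z⟫ + ⟪cs s, xplus - z⟫ := by
      rw [inner_add_left, real_inner_smul_left]
    have h3' : ‖xs s - xplus‖ ^ 2 / (2 * γ)
        = ‖xs s - z‖ ^ 2 / (2 * γ) + ‖xplus‖ ^ 2 / (2 * γ) - ‖z‖ ^ 2 / (2 * γ)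
          - (1 / γ) * ⟪xs s, xplus - z⟫ := by
      rw [h3]; field_simp
    rw [hApen s, h4]
    linarith
  have hc0 : (0:ℝ) ≤ ‖xplus - z‖ ^ 2 / (2 * γ) := by positivity
  set c : ℝ := ‖xplus - z‖ ^ 2 / (2 * γ) with hcdef
  set T1 : ℝ := ∑ s : Fin S,
      (‖xplus‖ ^ 2 / (2 * γ) - (‖z‖ ^ 2 / (2 * γ) - penv Xb (f s) (G s) γ z)
        - ⟪(1 / γ) • xs s + cs s, xplus - z⟫) with hT1
  set T2 : ℝ := ∑ s : Fin S, penv Xb (f s) (G s) γ z with hT2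
  -- Step D : key inequality for every t ∈ (0,1]
  have hkey : ∀ t : ℝ, 0 < t → t ≤ 1 →
      (φ xplus + (1 / (S : ℝ)) * T1) + c ≤ (φ z + (1 / (S : ℝ)) * T2) + t * c := by
    intro t ht0 ht1
    set w : EuclideanSpace ℝ (Fin n₁) := (1 - t) • xplus + t • z with hw
    have hwX : w ∈ X := hXconv hxplusX hz (by linarith) (le_of_lt ht0) (by ring)
    have hF := hxplus w hwX
    have hwz : w - z = (1 - t) • (xplus - z) := by rw [hw]; module
    have hwn : ‖w‖ ^ 2 = (1 - t) * ‖xplus‖ ^ 2 + t * ‖z‖ ^ 2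
        - t * (1 - t) * ‖xplus - z‖ ^ 2 := norm_combo_sq_aux xplus z t
    have hsummand : ∀ s : Fin S,
        (‖w‖ ^ 2 / (2 * γ) - (‖z‖ ^ 2 / (2 * γ) - penv Xb (f s) (G s) γ z)
          - ⟪(1 / γ) • xs s + cs s, w - z⟫)
        = (1 - t) * (‖xplus‖ ^ 2 / (2 * γ) - (‖z‖ ^ 2 / (2 * γ) - penv Xb (f s) (G s) γ z)
            - ⟪(1 / γ) • xs s + cs s, xplus - z⟫)
          + t * (penv Xb (f s) (G s) γ z) - t * (1 - t) * c := by
      intro s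
      have hi : ⟪(1 / γ) • xs s + cs s, w - z⟫
          = (1 - t) * ⟪(1 / γ) • xs s + cs s, xplus - z⟫ := by
        rw [hwz, real_inner_smul_right]
      rw [hi, hwn, hcdef]
      ring
    have hsum : ∑ s : Fin S,
        (‖w‖ ^ 2 / (2 * γ) - (‖z‖ ^ 2 / (2 * γ) - penv Xb (f s) (G s) γ z)
          - ⟪(1 / γ) • xs s + cs s, w - z⟫)
        = (1 - t) * T1 + t * T2 - (S : ℝ) * (t * (1 - t) * c) := by
      rw [Finset.sum_congr rfl (fun s _ => hsummand s)]
      rw [Finset.sum_sub_distrib, Finset.sum_add_distrib, ← Finset.mul_sum, ← Finset.mul_sum,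
        Finset.sum_const, Finset.card_univ, Fintype.card_fin, nsmul_eq_mul, hT1, hT2]
    have hφw : φ w ≤ (1 - t) * φ xplus + t * φ z :=
      hφ.2 (Set.mem_univ xplus) (Set.mem_univ z) (by linarith) (le_of_lt ht0) (by ring)
    have harith : (1 / (S : ℝ)) * ((1 - t) * T1 + t * T2 - (S : ℝ) * (t * (1 - t) * c))
        = (1 - t) * ((1 / (S : ℝ)) * T1) + t * ((1 / (S : ℝ)) * T2) - t * (1 - t) * c := by
      field_simp
    rw [hsum, harith] at hF
    nlinarith [hF, hφw, ht0, hc0]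
  -- Step E : pass to the limit t → 0
  have hfinal : (φ xplus + (1 / (S : ℝ)) * T1) + c ≤ φ z + (1 / (S : ℝ)) * T2 := by
    apply le_of_forall_pos_le_add
    intro ε hε
    have ht0 : 0 < min 1 (ε / (c + 1)) := lt_min one_pos (by positivity)
    have ht1 : min 1 (ε / (c + 1)) ≤ 1 := min_le_left _ _
    have h := hkey _ ht0 ht1
    have htc : min 1 (ε / (c + 1)) * c ≤ ε := by
      have h2 : min 1 (ε / (c + 1)) ≤ ε / (c + 1) := min_le_right _ _
      have h3 : min 1 (ε / (c + 1)) * c ≤ (ε / (c + 1)) * c :=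
        mul_le_mul_of_nonneg_right h2 hc0
      have h4 : (ε / (c + 1)) * c ≤ ε := by
        rw [div_mul_eq_mul_div, div_le_iff₀ (by linarith)]
        nlinarith [hε.le, hc0]
      linarith only [h3, h4]
    linarith only [h, htc]
  -- conclude
  have hsumle : ∑ s : Fin S, penv Xb (f s) (G s) γ xplus ≤ T1 := by
    rw [hT1]; exact Finset.sum_le_sum (fun s _ => hsub s)
  have hmul := mul_le_mul_of_nonneg_left hsumle (show (0:ℝ) ≤ 1 / (S : ℝ) by positivity)
  have hnorm : ‖z - xplus‖ ^ 2 / (2 * γ) = c := by rw [hcdef, norm_sub_rev]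
  rw [hnorm]
  linarith only [hfinal, hmul]
end

section
/- Finite termination of the inner loop (Proposition 4.1(b), first part): fix γ > 0 and let {x_i}_{i≥0} ⊆ X with x₀ ∈ X be any sequence such that, for every i, x_{i+1} minimizes x ↦ φ(x) + (1/S) Σ_{s=1}^S ê_s(x) over X, where the surrogates ê_s(x) = ‖x‖²/(2γ) − ( ‖x_i‖²/(2γ) − e_γψ_s(x_i) ) − ⟨ x^s_i/γ + c^s_i, x − x_i ⟩ are built from subproblem solutions (x^s_i, y^s_i, c^s_i) at z = x_i with parameter γ. Then, under Assumptions A and B, Σ_{i=0}^∞ ‖x_{i+1} − x_i‖² < ∞; in particular ‖x_{i+1} − x_i‖ → 0, and for every ε > 0 the index min{ i : ‖x_{i+1} − x_i‖ ≤ ε γ } is finite. -/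
/-! The surrogate `ê_s` built at `x_i` majorizes the partial Moreau envelope `e_γψ_s` on `X`
(by optimality of `(x^s_i, y^s_i)` and the supergradient inequality for `c^s_i`) and touches it
at `x_i`, while `φ + (1/S) Σ ê_s` is `1/γ`-strongly convex. Hence each step decreases
`F = φ + (1/S) Σ e_γψ_s` by at least `‖x_{i+1} - x_i‖² / (2γ)`. And `F` is bounded below on `X`:
for fixed `a`, `ψ̄_s(a, ·)` is concave, hence continuous on `int X̄ ⊇ X`, and by Assumptions A
and B the envelope is at least `ψ̄_s(a, ·) - κ_s · diam X̄`. So the decrements have a finite sum. -/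

open scoped RealInnerProductSpace
open Filter Topology

theorem UniformConvexOn.add_le_of_isMinOn {E : Type*} [NormedAddCommGroup E] [NormedSpace ℝ E]
    {s : Set E} {φ : ℝ → ℝ} {f : E → ℝ} {x y : E} (hf : UniformConvexOn s φ f)
    (hmin : IsMinOn f s x) (hx : x ∈ s) (hy : y ∈ s) : f x + φ ‖x - y‖ ≤ f y := by
  have hbound : ∀ t ∈ Set.Ioo (0 : ℝ) 1, f x + (1 - t) * φ ‖x - y‖ ≤ f y := by
    rintro t ⟨ht₀, ht₁⟩
    have hconv := hf.2 hx hy (sub_nonneg.2 ht₁.le) ht₀.le (sub_add_cancel 1 t)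
    have hle := isMinOn_iff.1 hmin _ (hf.1 hx hy (sub_nonneg.2 ht₁.le) ht₀.le (sub_add_cancel 1 t))
    rw [smul_eq_mul, smul_eq_mul] at hconv
    refine le_of_mul_le_mul_left ?_ ht₀
    linarith
  have hlim : Tendsto (fun t : ℝ => f x + (1 - t) * φ ‖x - y‖) (𝓝[>] 0)
      (𝓝 (f x + φ ‖x - y‖)) := by
    have hcont : Continuous fun t : ℝ => f x + (1 - t) * φ ‖x - y‖ := by fun_prop
    simpa using tendsto_nhdsWithin_of_tendsto_nhds (hcont.tendsto 0)
  exact le_of_tendsto hlim (eventually_of_mem (Ioo_mem_nhdsGT one_pos) hbound)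

theorem summable_of_add_le_of_forall_le {F a : ℕ → ℝ} {C : ℝ} (ha : ∀ i, 0 ≤ a i)
    (hF : ∀ i, C ≤ F i) (hdesc : ∀ i, F (i + 1) + a i ≤ F i) : Summable a := by
  refine summable_of_sum_range_le ha (c := F 0 - C) fun n => ?_
  have htele : ∑ i ∈ Finset.range n, a i ≤ F 0 - F n := by
    induction n with
    | zero => simp
    | succ n ih => rw [Finset.sum_range_succ]; linarith [hdesc n]
  linarith [hF n]

theorem bddBelow_image_add_sum_mul {α ι : Type*} [Fintype ι] {X : Set α} {φ : α → ℝ}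
    {P : ι → α → ℝ} {w : ι → ℝ} (hφ : BddBelow (φ '' X)) (hP : ∀ s, BddBelow (P s '' X))
    (hw : ∀ s, 0 ≤ w s) : BddBelow ((fun x => φ x + ∑ s, w s * P s x) '' X) := by
  obtain ⟨bφ, hbφ⟩ := hφ
  choose b hb using hP
  refine ⟨bφ + ∑ s, w s * b s, ?_⟩
  rintro _ ⟨x, hx, rfl⟩
  dsimp only
  gcongr with s
  exacts [hbφ ⟨x, hx, rfl⟩, hw s, hb s ⟨x, hx, rfl⟩]

section SurrogateModel

variable {E : Type*} [NormedAddCommGroup E] [InnerProductSpace ℝ E]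

/-- The surrogate `ê_s` of the envelope built at `z = x_i`, with `e = e_γψ_s(x_i)` and
`g = x^s_i/γ + c^s_i`. -/
noncomputable def surrogateModel (γ : ℝ) (z : E) (e : ℝ) (g : E) (x : E) : ℝ :=
  ‖x‖ ^ 2 / (2 * γ) - (‖z‖ ^ 2 / (2 * γ) - e) - ⟪g, x - z⟫

@[simp]
theorem surrogateModel_self (γ : ℝ) (z : E) (e : ℝ) (g : E) : surrogateModel γ z e g z = e := by
  simp [surrogateModel]

theorem sum_mul_surrogateModel {ι : Type*} [Fintype ι] {w : ι → ℝ} (hw : ∑ s, w s = 1)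
    (γ : ℝ) (z : E) (e : ι → ℝ) (g : ι → E) (x : E) :
    ∑ s, w s * surrogateModel γ z (e s) (g s) x
      = surrogateModel γ z (∑ s, w s * e s) (∑ s, w s • g s) x := by
  simp only [surrogateModel, mul_sub, Finset.sum_sub_distrib, ← Finset.sum_mul, hw, one_mul,
    sum_inner, real_inner_smul_left]

theorem strongConvexOn_add_surrogateModel {K : Set E} {φ : E → ℝ} (hφ : ConvexOn ℝ K φ)
    (γ : ℝ) (z : E) (e : ℝ) (g : E) :
    StrongConvexOn K γ⁻¹ fun x => φ x + surrogateModel γ z e g x := by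
  have haffine : ConvexOn ℝ K fun x => φ x + ((e - ‖z‖ ^ 2 / (2 * γ) + ⟪g, z⟫) - ⟪g, x⟫) :=
    hφ.add ((convexOn_const _ hφ.1).sub ((innerₛₗ ℝ g).concaveOn hφ.1))
  rw [strongConvexOn_iff_convex]
  convert haffine using 2 with x
  simp only [surrogateModel, inner_sub_right]
  ring

theorem add_sq_div_le_of_isMinOn_surrogateModel {ι : Type*} [Fintype ι] {K : Set E}
    {φ : E → ℝ} (hφ : ConvexOn ℝ K φ) {P : ι → E → ℝ} {w : ι → ℝ} (hw₀ : ∀ s, 0 ≤ w s)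
    (hw₁ : ∑ s, w s = 1) {γ : ℝ} {g : ι → E} {z z' : E} (hz : z ∈ K) (hz' : z' ∈ K)
    (hmaj : ∀ s, P s z' ≤ surrogateModel γ z (P s z) (g s) z')
    (hmin : IsMinOn (fun x => φ x + ∑ s, w s * surrogateModel γ z (P s z) (g s) x) K z') :
    φ z' + ∑ s, w s * P s z' + ‖z' - z‖ ^ 2 / (2 * γ) ≤ φ z + ∑ s, w s * P s z := by
  simp only [sum_mul_surrogateModel hw₁] at hmin
  have hstrong := (strongConvexOn_add_surrogateModel hφ γ z _ _).add_le_of_isMinOn hmin hz' hz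
  calc φ z' + ∑ s, w s * P s z' + ‖z' - z‖ ^ 2 / (2 * γ)
      ≤ φ z' + ∑ s, w s * surrogateModel γ z (P s z) (g s) z' + ‖z' - z‖ ^ 2 / (2 * γ) := by
        gcongr with s
        exacts [hw₀ s, hmaj s]
    _ ≤ φ z + ∑ s, w s * P s z := by
        rw [sum_mul_surrogateModel hw₁]
        simp only [surrogateModel_self] at hstrong
        linarith [show γ⁻¹ / 2 * ‖z' - z‖ ^ 2 = ‖z' - z‖ ^ 2 / (2 * γ) by ring]

end SurrogateModel

section Subproblem

variable {n₁ n₂ ℓ : ℕ} {Xb : Set (EuclideanSpace ℝ (Fin n₁))}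
  {f : EuclideanSpace ℝ (Fin n₁) → EuclideanSpace ℝ (Fin n₂) → ℝ}
  {G : EuclideanSpace ℝ (Fin n₁) → EuclideanSpace ℝ (Fin n₂) → Fin ℓ → ℝ}
  {γ : ℝ} {x z w : EuclideanSpace ℝ (Fin n₁)} {y : EuclideanSpace ℝ (Fin n₂)}

structure IsSubproblemSolution (Xb : Set (EuclideanSpace ℝ (Fin n₁)))
    (f : EuclideanSpace ℝ (Fin n₁) → EuclideanSpace ℝ (Fin n₂) → ℝ)
    (G : EuclideanSpace ℝ (Fin n₁) → EuclideanSpace ℝ (Fin n₂) → Fin ℓ → ℝ) (γ : ℝ)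
    (z x : EuclideanSpace ℝ (Fin n₁)) (y : EuclideanSpace ℝ (Fin n₂))
    (c : EuclideanSpace ℝ (Fin n₁)) : Prop where
  mem : x ∈ Xb
  feasible : ∀ j, G x y j ≤ 0
  isMin : ∀ x' ∈ Xb, ∀ y', (∀ j, G x' y' j ≤ 0) →
    f z y + ‖x - z‖ ^ 2 / (2 * γ) ≤ f z y' + ‖x' - z‖ ^ 2 / (2 * γ)
  subgradient : ∀ z', -f z' y ≥ -f z y + ⟪c, z' - z⟫

def penvValues (Xb : Set (EuclideanSpace ℝ (Fin n₁)))
    (f : EuclideanSpace ℝ (Fin n₁) → EuclideanSpace ℝ (Fin n₂) → ℝ)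
    (G : EuclideanSpace ℝ (Fin n₁) → EuclideanSpace ℝ (Fin n₂) → Fin ℓ → ℝ)
    (γ : ℝ) (z : EuclideanSpace ℝ (Fin n₁)) : Set ℝ :=
  {v : ℝ | ∃ x ∈ Xb, ∃ y : EuclideanSpace ℝ (Fin n₂),
    (∀ i, G x y i ≤ 0) ∧ v = f z y + ‖x - z‖ ^ 2 / (2 * γ)}

theorem mem_penvValues (hx : x ∈ Xb) (hy : ∀ j, G x y j ≤ 0) :
    f z y + ‖x - z‖ ^ 2 / (2 * γ) ∈ penvValues Xb f G γ z :=
  ⟨x, hx, y, hy, rfl⟩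

theorem penv_le_of_feasible (hbdd : BddBelow (penvValues Xb f G γ z)) (hx : x ∈ Xb)
    (hy : ∀ j, G x y j ≤ 0) : penv Xb f G γ z ≤ f z y + ‖x - z‖ ^ 2 / (2 * γ) :=
  csInf_le hbdd (mem_penvValues hx hy)

namespace IsSubproblemSolution

variable {c : EuclideanSpace ℝ (Fin n₁)}

theorem penv_eq (h : IsSubproblemSolution Xb f G γ z x y c) :
    penv Xb f G γ z = f z y + ‖x - z‖ ^ 2 / (2 * γ) := by
  refine IsLeast.csInf_eq ⟨mem_penvValues h.mem h.feasible, ?_⟩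
  rintro _ ⟨x', hx', y', hy', rfl⟩
  exact h.isMin x' hx' y' hy'

theorem penv_le_surrogateModel (h : IsSubproblemSolution Xb f G γ z x y c)
    (hbdd : BddBelow (penvValues Xb f G γ w)) :
    penv Xb f G γ w ≤ surrogateModel γ z (penv Xb f G γ z) ((1 / γ) • x + c) w := by
  calc penv Xb f G γ w ≤ f w y + ‖x - w‖ ^ 2 / (2 * γ) := penv_le_of_feasible hbdd h.mem h.feasible
    _ ≤ f z y - ⟪c, w - z⟫ + ‖x - w‖ ^ 2 / (2 * γ) := by linarith [h.subgradient w]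
    _ = surrogateModel γ z (penv Xb f G γ z) ((1 / γ) • x + c) w := by
        rw [h.penv_eq, surrogateModel, norm_sub_sq_real x w, norm_sub_sq_real x z, inner_add_left,
          real_inner_smul_left, inner_sub_right, inner_sub_right, real_inner_comm w x,
          real_inner_comm z x]
        ring

end IsSubproblemSolution

def IsRecourseFunction (Xb : Set (EuclideanSpace ℝ (Fin n₁)))
    (f : EuclideanSpace ℝ (Fin n₁) → EuclideanSpace ℝ (Fin n₂) → ℝ)
    (G : EuclideanSpace ℝ (Fin n₁) → EuclideanSpace ℝ (Fin n₂) → Fin ℓ → ℝ)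
    (ψ : EuclideanSpace ℝ (Fin n₁) → EuclideanSpace ℝ (Fin n₁) → ℝ) : Prop :=
  ∀ x ∈ Xb, ∀ z ∈ Xb, ∃ y : EuclideanSpace ℝ (Fin n₂),
    (∀ i, G x y i ≤ 0) ∧ ψ x z = f z y ∧
    ∀ y' : EuclideanSpace ℝ (Fin n₂), (∀ i, G x y' i ≤ 0) → ψ x z ≤ f z y'

namespace IsRecourseFunction

variable {ψ : EuclideanSpace ℝ (Fin n₁) → EuclideanSpace ℝ (Fin n₁) → ℝ}
  {X : Set (EuclideanSpace ℝ (Fin n₁))} {κ : ℝ}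

theorem le (h : IsRecourseFunction Xb f G ψ) (hx : x ∈ Xb) (hz : z ∈ Xb)
    (hy : ∀ i, G x y i ≤ 0) : ψ x z ≤ f z y := by
  obtain ⟨-, -, -, hmin⟩ := h x hx z hz
  exact hmin y hy

theorem concaveOn (h : IsRecourseFunction Xb f G ψ) (hXb : Convex ℝ Xb)
    (hf : ∀ y, ConcaveOn ℝ Set.univ fun z => f z y) {a : EuclideanSpace ℝ (Fin n₁)}
    (ha : a ∈ Xb) : ConcaveOn ℝ Xb (ψ a) := by
  refine ⟨hXb, fun z₁ hz₁ z₂ hz₂ t₁ t₂ ht₁ ht₂ ht => ?_⟩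
  obtain ⟨y, hy, hψy, -⟩ := h a ha _ (hXb hz₁ hz₂ ht₁ ht₂ ht)
  calc t₁ • ψ a z₁ + t₂ • ψ a z₂ ≤ t₁ • f z₁ y + t₂ • f z₂ y := by
        gcongr
        exacts [h.le ha hz₁ hy, h.le ha hz₂ hy]
    _ ≤ f (t₁ • z₁ + t₂ • z₂) y := (hf y).2 trivial trivial ht₁ ht₂ ht
    _ = ψ a (t₁ • z₁ + t₂ • z₂) := hψy.symm

theorem sub_le_of_feasible (h : IsRecourseFunction Xb f G ψ)
    (hB : ∀ z ∈ X, ∀ x₁ ∈ Xb, ∀ x₂ ∈ Xb, |ψ x₁ z - ψ x₂ z| ≤ κ * ‖x₁ - x₂‖) (hκ : 0 ≤ κ)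
    (hX : X ⊆ Xb) (hγ : 0 ≤ γ) {a : EuclideanSpace ℝ (Fin n₁)} {r : ℝ} (ha : a ∈ Xb)
    (hr : Xb ⊆ Metric.closedBall a r) (hz : z ∈ X) (hx : x ∈ Xb) (hy : ∀ i, G x y i ≤ 0) :
    ψ a z - κ * r ≤ f z y + ‖x - z‖ ^ 2 / (2 * γ) := by
  have hlip := (abs_le.1 (hB z hz x hx a ha)).1
  have hxa : ‖x - a‖ ≤ r := mem_closedBall_iff_norm.1 (hr hx)
  have hψ := h.le hx (hX hz) hy
  have hsq : 0 ≤ ‖x - z‖ ^ 2 / (2 * γ) := by positivity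
  linarith [mul_le_mul_of_nonneg_left hxa hκ]

theorem bddBelow_penvValues (h : IsRecourseFunction Xb f G ψ)
    (hB : ∀ z ∈ X, ∀ x₁ ∈ Xb, ∀ x₂ ∈ Xb, |ψ x₁ z - ψ x₂ z| ≤ κ * ‖x₁ - x₂‖) (hκ : 0 ≤ κ)
    (hX : X ⊆ Xb) (hγ : 0 ≤ γ) (hXb : Bornology.IsBounded Xb) (hz : z ∈ X) :
    BddBelow (penvValues Xb f G γ z) := by
  obtain ⟨r, hr⟩ := hXb.subset_closedBall z
  refine ⟨ψ z z - κ * r, ?_⟩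
  rintro _ ⟨x, hx, y, hy, rfl⟩
  exact h.sub_le_of_feasible hB hκ hX hγ (hX hz) hr hz hx hy

theorem bddBelow_penv (h : IsRecourseFunction Xb f G ψ)
    (hB : ∀ z ∈ X, ∀ x₁ ∈ Xb, ∀ x₂ ∈ Xb, |ψ x₁ z - ψ x₂ z| ≤ κ * ‖x₁ - x₂‖) (hκ : 0 ≤ κ)
    (hγ : 0 ≤ γ) (hXbconv : Convex ℝ Xb) (hXb : Bornology.IsBounded Xb)
    (hf : ∀ y, ConcaveOn ℝ Set.univ fun z => f z y) (hXcomp : IsCompact X)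
    (hXint : X ⊆ interior Xb) : BddBelow (penv Xb f G γ '' X) := by
  rcases X.eq_empty_or_nonempty with rfl | ⟨a, haX⟩
  · simp
  have hX : X ⊆ Xb := hXint.trans interior_subset
  obtain ⟨r, hr⟩ := hXb.subset_closedBall a
  obtain ⟨b, hb⟩ := hXcomp.bddBelow_image
    ((h.concaveOn hXbconv hf (hX haX)).continuousOn_interior.mono hXint)
  refine ⟨b - κ * r, ?_⟩
  rintro _ ⟨z, hz, rfl⟩
  obtain ⟨y, hy, -⟩ := h z (hX hz) z (hX hz)
  refine le_csInf ⟨_, mem_penvValues (hX hz) hy⟩ ?_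
  rintro _ ⟨x, hx, y', hy', rfl⟩
  linarith [hb ⟨z, hz, rfl⟩, h.sub_le_of_feasible hB hκ hX hγ (hX haX) hr hz hx hy']

end IsRecourseFunction

end Subproblem

theorem stmt9_general {n₁ n₂ ℓ S : ℕ} (hS : 0 < S)
    (φ : EuclideanSpace ℝ (Fin n₁) → ℝ) (hφ : ConvexOn ℝ Set.univ φ)
    (X Xb : Set (EuclideanSpace ℝ (Fin n₁)))
    (hXconv : Convex ℝ X) (hXcomp : IsCompact X)
    (hXbconv : Convex ℝ Xb) (hXbcomp : IsCompact Xb)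
    (hXint : X ⊆ interior Xb)
    (f : Fin S → EuclideanSpace ℝ (Fin n₁) → EuclideanSpace ℝ (Fin n₂) → ℝ)
    (hfconc : ∀ s y, ConcaveOn ℝ Set.univ (fun x => f s x y))
    (G : Fin S → EuclideanSpace ℝ (Fin n₁) → EuclideanSpace ℝ (Fin n₂) → Fin ℓ → ℝ)
    (ψb : Fin S → EuclideanSpace ℝ (Fin n₁) → EuclideanSpace ℝ (Fin n₁) → ℝ)
    (hA : ∀ s, ∀ x ∈ Xb, ∀ z ∈ Xb, ∃ y : EuclideanSpace ℝ (Fin n₂),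
      (∀ i, G s x y i ≤ 0) ∧ ψb s x z = f s z y ∧
      ∀ y' : EuclideanSpace ℝ (Fin n₂), (∀ i, G s x y' i ≤ 0) → ψb s x z ≤ f s z y')
    (κ : Fin S → ℝ) (hκ : ∀ s, 0 ≤ κ s)
    (hB : ∀ s, ∀ z ∈ X, ∀ x₁ ∈ Xb, ∀ x₂ ∈ Xb,
      |ψb s x₁ z - ψb s x₂ z| ≤ κ s * ‖x₁ - x₂‖)
    (γ : ℝ) (hγ : 0 < γ)
    (xseq : ℕ → EuclideanSpace ℝ (Fin n₁))
    (hxseqX : ∀ i, xseq i ∈ X)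
    (xs : ℕ → Fin S → EuclideanSpace ℝ (Fin n₁))
    (ys : ℕ → Fin S → EuclideanSpace ℝ (Fin n₂))
    (cs : ℕ → Fin S → EuclideanSpace ℝ (Fin n₁))
    (hxs : ∀ i s, xs i s ∈ Xb)
    (hfeas : ∀ i s j, G s (xs i s) (ys i s) j ≤ 0)
    (hmin : ∀ i s, ∀ x ∈ Xb, ∀ y : EuclideanSpace ℝ (Fin n₂), (∀ j, G s x y j ≤ 0) →
      f s (xseq i) (ys i s) + ‖xs i s - xseq i‖ ^ 2 / (2 * γ)
        ≤ f s (xseq i) y + ‖x - xseq i‖ ^ 2 / (2 * γ))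
    (hc : ∀ i s, ∀ z' : EuclideanSpace ℝ (Fin n₁),
      -f s z' (ys i s) ≥ -f s (xseq i) (ys i s) + ⟪cs i s, z' - xseq i⟫)
    (hmaster : ∀ i, ∀ x ∈ X,
      φ (xseq (i + 1)) + (1 / (S : ℝ)) * ∑ s : Fin S,
        (‖xseq (i + 1)‖ ^ 2 / (2 * γ)
          - (‖xseq i‖ ^ 2 / (2 * γ) - penv Xb (f s) (G s) γ (xseq i))
          - ⟪(1 / γ) • xs i s + cs i s, xseq (i + 1) - xseq i⟫)
      ≤ φ x + (1 / (S : ℝ)) * ∑ s : Fin S,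
        (‖x‖ ^ 2 / (2 * γ)
          - (‖xseq i‖ ^ 2 / (2 * γ) - penv Xb (f s) (G s) γ (xseq i))
          - ⟪(1 / γ) • xs i s + cs i s, x - xseq i⟫)) :
    Summable (fun i => ‖xseq (i + 1) - xseq i‖ ^ 2) ∧
    Tendsto (fun i => ‖xseq (i + 1) - xseq i‖) atTop (𝓝 0) ∧
    ∀ ε : ℝ, 0 < ε → ∃ i : ℕ, ‖xseq (i + 1) - xseq i‖ ≤ ε * γ := by
  have hXXb : X ⊆ Xb := hXint.trans interior_subset
  have hrec : ∀ s, IsRecourseFunction Xb (f s) (G s) (ψb s) := hA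
  have hsol : ∀ i s, IsSubproblemSolution Xb (f s) (G s) γ (xseq i) (xs i s) (ys i s) (cs i s) :=
    fun i s => ⟨hxs i s, hfeas i s, hmin i s, hc i s⟩
  have hw : ∑ _s : Fin S, 1 / (S : ℝ) = 1 := by simp [hS.ne']
  set F : ℕ → ℝ := fun i => φ (xseq i) + ∑ s, 1 / (S : ℝ) * penv Xb (f s) (G s) γ (xseq i)
  have hdesc : ∀ i, F (i + 1) + ‖xseq (i + 1) - xseq i‖ ^ 2 / (2 * γ) ≤ F i := fun i =>
    add_sq_div_le_of_isMinOn_surrogateModel (hφ.subset (Set.subset_univ X) hXconv)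
      (fun _ => by positivity) hw (hxseqX i) (hxseqX (i + 1))
      (fun s => (hsol i s).penv_le_surrogateModel ((hrec s).bddBelow_penvValues (hB s) (hκ s) hXXb
        hγ.le hXbcomp.isBounded (hxseqX (i + 1))))
      (isMinOn_iff.2 fun x hx => by
        have hx := hmaster i x hx
        simp only [Finset.mul_sum] at hx
        exact hx)
  have hFbdd : BddBelow (Set.range F) := by
    refine (bddBelow_image_add_sum_mul (w := fun _ => 1 / (S : ℝ))
      (hXcomp.bddBelow_image hφ.locallyLipschitz.continuous.continuousOn)
      (fun s => (hrec s).bddBelow_penv (hB s) (hκ s) hγ.le hXbconv hXbcomp.isBounded (hfconc s)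
        hXcomp hXint) (fun _ => by positivity)).mono ?_
    rintro _ ⟨i, rfl⟩
    exact ⟨xseq i, hxseqX i, rfl⟩
  obtain ⟨C, hC⟩ := hFbdd
  have hsumm : Summable fun i => ‖xseq (i + 1) - xseq i‖ ^ 2 :=
    (summable_div_const_iff (by positivity)).1 (summable_of_add_le_of_forall_le
      (fun _ => by positivity) (fun i => hC ⟨i, rfl⟩) hdesc)
  have htend : Tendsto (fun i => ‖xseq (i + 1) - xseq i‖) atTop (𝓝 0) := by
    simpa using hsumm.tendsto_atTop_zero.sqrt
  exact ⟨hsumm, htend, fun ε hε => (htend.eventually (eventually_le_nhds (mul_pos hε hγ))).exists⟩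

theorem stmt9 {n₁ n₂ ℓ S : ℕ} (hS : 0 < S)
    (φ : EuclideanSpace ℝ (Fin n₁) → ℝ) (hφ : ConvexOn ℝ Set.univ φ)
    (X Xb : Set (EuclideanSpace ℝ (Fin n₁)))
    (hXne : X.Nonempty) (hXconv : Convex ℝ X) (hXcomp : IsCompact X)
    (hXbne : Xb.Nonempty) (hXbconv : Convex ℝ Xb) (hXbcomp : IsCompact Xb)
    (hXint : X ⊆ interior Xb)
    (f : Fin S → EuclideanSpace ℝ (Fin n₁) → EuclideanSpace ℝ (Fin n₂) → ℝ)
    (hfconc : ∀ s y, ConcaveOn ℝ Set.univ (fun x => f s x y))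
    (hfconv : ∀ s x, ConvexOn ℝ Set.univ (fun y => f s x y))
    (G : Fin S → EuclideanSpace ℝ (Fin n₁) → EuclideanSpace ℝ (Fin n₂) → Fin ℓ → ℝ)
    (hG : ∀ s i, ConvexOn ℝ Set.univ
      (fun p : EuclideanSpace ℝ (Fin n₁) × EuclideanSpace ℝ (Fin n₂) => G s p.1 p.2 i))
    (ψb : Fin S → EuclideanSpace ℝ (Fin n₁) → EuclideanSpace ℝ (Fin n₁) → ℝ)
    (hA : ∀ s, ∀ x ∈ Xb, ∀ z ∈ Xb, ∃ y : EuclideanSpace ℝ (Fin n₂),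
      (∀ i, G s x y i ≤ 0) ∧ ψb s x z = f s z y ∧
      ∀ y' : EuclideanSpace ℝ (Fin n₂), (∀ i, G s x y' i ≤ 0) → ψb s x z ≤ f s z y')
    (κ : Fin S → ℝ) (hκ : ∀ s, 0 ≤ κ s)
    (hB : ∀ s, ∀ z ∈ X, ∀ x₁ ∈ Xb, ∀ x₂ ∈ Xb,
      |ψb s x₁ z - ψb s x₂ z| ≤ κ s * ‖x₁ - x₂‖)
    (γ : ℝ) (hγ : 0 < γ)
    (xseq : ℕ → EuclideanSpace ℝ (Fin n₁))
    (hxseqX : ∀ i, xseq i ∈ X)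
    (xs : ℕ → Fin S → EuclideanSpace ℝ (Fin n₁))
    (ys : ℕ → Fin S → EuclideanSpace ℝ (Fin n₂))
    (cs : ℕ → Fin S → EuclideanSpace ℝ (Fin n₁))
    (hxs : ∀ i s, xs i s ∈ Xb)
    (hfeas : ∀ i s j, G s (xs i s) (ys i s) j ≤ 0)
    (hmin : ∀ i s, ∀ x ∈ Xb, ∀ y : EuclideanSpace ℝ (Fin n₂), (∀ j, G s x y j ≤ 0) →
      f s (xseq i) (ys i s) + ‖xs i s - xseq i‖ ^ 2 / (2 * γ)
        ≤ f s (xseq i) y + ‖x - xseq i‖ ^ 2 / (2 * γ))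
    (hc : ∀ i s, ∀ z' : EuclideanSpace ℝ (Fin n₁),
      -f s z' (ys i s) ≥ -f s (xseq i) (ys i s) + ⟪cs i s, z' - xseq i⟫)
    (hmaster : ∀ i, ∀ x ∈ X,
      φ (xseq (i + 1)) + (1 / (S : ℝ)) * ∑ s : Fin S,
        (‖xseq (i + 1)‖ ^ 2 / (2 * γ)
          - (‖xseq i‖ ^ 2 / (2 * γ) - penv Xb (f s) (G s) γ (xseq i))
          - ⟪(1 / γ) • xs i s + cs i s, xseq (i + 1) - xseq i⟫)
      ≤ φ x + (1 / (S : ℝ)) * ∑ s : Fin S,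
        (‖x‖ ^ 2 / (2 * γ)
          - (‖xseq i‖ ^ 2 / (2 * γ) - penv Xb (f s) (G s) γ (xseq i))
          - ⟪(1 / γ) • xs i s + cs i s, x - xseq i⟫)) :
    Summable (fun i => ‖xseq (i + 1) - xseq i‖ ^ 2) ∧
    Tendsto (fun i => ‖xseq (i + 1) - xseq i‖) atTop (𝓝 0) ∧
    ∀ ε : ℝ, 0 < ε → ∃ i : ℕ, ‖xseq (i + 1) - xseq i‖ ≤ ε * γ :=
  stmt9_general hS φ hφ X Xb hXconv hXcomp hXbconv hXbcomp hXint f hfconc G ψb hA κ hκ hB γ hγ xseq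
    hxseqX xs ys cs hxs hfeas hmin hc hmaster
end

section
/- Approximate stationarity at inner termination (Proposition 4.1(b), second part): fix γ > 0, ε > 0 and an iterate z ∈ X. For each scenario s take a subproblem solution (x^s, y^s, c^s) at z with parameter γ, form the surrogates ê_s(x) = ‖x‖²/(2γ) − ( ‖z‖²/(2γ) − e_γψ_s(z) ) − ⟨ x^s/γ + c^s, x − z ⟩, and let x⁺ minimize φ(x) + (1/S) Σ_{s=1}^S ê_s(x) over X. If ‖x⁺ − z‖ ≤ ε γ, then there exist vectors a^s ∈ ∂₁ψ̄_s(x^s, z) (subgradients at x^s of the convex function ψ̄_s(·,z) on X̄), n^s ∈ N_{X̄}(x^s), u ∈ ∂φ(x⁺), and w ∈ N_X(x⁺), such that ‖ (1/S) Σ_{s=1}^S ( a^s − c^s + n^s ) + u + w ‖ ≤ ε. -/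
/-!
Each `x^s` is the proximal point at `z` of the marginal function `ψ̄_s(·, z)`, which is convex
because it is the optimal value of a jointly convex program; hence `(z - x^s)/γ` is a subgradient
of it on `X̄`, and `n^s = 0` will do. Up to a constant the averaged surrogate is
`‖x - γ b̄‖²/(2γ)`, where `b̄` is the average of `x^s/γ + c^s`, so `x⁺` is the proximal point of
`φ` on `X` at `γ b̄` and `b̄ - x⁺/γ` is a subgradient of `φ` relative to `X`. A Hahn–Banach
separation of an epigraph from `X × (-∞, r]` splits it as `u + w` with `u ∈ ∂φ(x⁺)`,
`w ∈ N_X(x⁺)`.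
The `c^s` cancel, and the residual vector is `(z - x⁺)/γ`, of norm at most `ε`.
-/

open scoped RealInnerProductSpace

open Set Filter Topology

theorem nonpos_of_forall_le_mul {D K : ℝ} (h : ∀ t ∈ Ioc (0 : ℝ) 1, D ≤ t * K) : D ≤ 0 := by
  have hlim : Tendsto (fun t => t * K) (𝓝[>] 0) (𝓝 0) := by
    simpa using ((tendsto_id (x := 𝓝 (0 : ℝ))).mul_const K).mono_left nhdsWithin_le_nhds
  exact ge_of_tendsto hlim (mem_of_superset (Ioc_mem_nhdsGT one_pos) h)

theorem ConvexOn.le_add_of_forall_le_add_mul_add_sq {E : Type*} [AddCommGroup E] [Module ℝ E]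
    {C : Set E} {F : E → ℝ} (hF : ConvexOn ℝ C F) {x₀ x : E} (hx₀ : x₀ ∈ C) (hx : x ∈ C)
    {L K : ℝ} (h : ∀ t ∈ Ioc (0 : ℝ) 1, F x₀ ≤ F (x₀ + t • (x - x₀)) + t * L + t ^ 2 * K) :
    F x₀ ≤ F x + L := by
  suffices F x₀ - F x - L ≤ 0 by linarith
  refine nonpos_of_forall_le_mul (K := K) fun t ht => ?_
  have hseg : F (x₀ + t • (x - x₀)) ≤ (1 - t) * F x₀ + t * F x := by
    have := hF.2 hx₀ hx (sub_nonneg.2 ht.2) ht.1.le (sub_add_cancel 1 t)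
    rwa [smul_eq_mul, smul_eq_mul, show (1 - t) • x₀ + t • x = x₀ + t • (x - x₀) by module]
      at this
  have : t * (F x₀ - F x - L) ≤ t * (t * K) := by linarith [h t ht]
  exact le_of_mul_le_mul_left this ht.1

section Subgradient

variable {E : Type*} [NormedAddCommGroup E] [InnerProductSpace ℝ E]

def IsSubgradientOn (C : Set E) (h : E → ℝ) (x₀ c : E) : Prop :=
  ∀ x ∈ C, h x₀ + ⟪c, x - x₀⟫ ≤ h x

def normalCone (C : Set E) (x₀ : E) : Set E :=
  {w | ∀ x ∈ C, ⟪w, x - x₀⟫ ≤ 0}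

theorem ConvexOn.exists_isSubgradientOn_univ_of_isMinOn [CompleteSpace E] {h : E → ℝ}
    {C : Set E} {x₀ : E} (hh : ConvexOn ℝ univ h) (hcont : Continuous h) (hC : Convex ℝ C)
    (hx₀ : x₀ ∈ C) (hmin : IsMinOn h C x₀) :
    ∃ u, IsSubgradientOn univ h x₀ u ∧ -u ∈ normalCone C x₀ := by
  have hepi : Convex ℝ {p : E × ℝ | h p.1 < p.2} := by
    simpa using hh.convex_strict_epigraph
  have hdisj : Disjoint {p : E × ℝ | h p.1 < p.2} (C ×ˢ Iic (h x₀)) := by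
    rw [disjoint_left]
    rintro ⟨x, r⟩ (hr : h x < r) ⟨hx, hr' : r ≤ h x₀⟩
    exact (hr'.trans (hmin hx)).not_gt hr
  obtain ⟨F, s, hFA, hFB⟩ := geometric_hahn_banach_open hepi
    (isOpen_lt (hcont.comp continuous_fst) continuous_snd) (hC.prod (convex_Iic _)) hdisj
  set L : StrongDual ℝ E := F.comp (ContinuousLinearMap.inl ℝ E ℝ)
  set c := F (0, 1)
  have hF : ∀ x r, F (x, r) = L x + r * c := fun x r => by
    rw [show (x, r) = (x, 0) + r • ((0 : E), (1 : ℝ)) by simp, map_add, map_smul, smul_eq_mul]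
    rfl
  have hA : ∀ x, ∀ r, h x < r → L x + r * c < s := fun x r hr => hF x r ▸ hFA (x, r) hr
  have hB : ∀ x ∈ C, s ≤ L x + h x₀ * c := fun x hx =>
    hF x _ ▸ hFB (x, h x₀) ⟨hx, mem_Iic.2 le_rfl⟩
  have hc : 0 < -c := by linarith [hA x₀ (h x₀ + 1) (by linarith), hB x₀ hx₀]
  have hgraph : ∀ x, L x + h x * c ≤ s := fun x => le_of_forall_pos_lt_add fun ε hε => by
    have := hA x (h x + ε / -c) (by linarith [div_pos hε hc])
    have hε' : (h x + ε / -c) * c = h x * c - ε := by field_simp [(neg_pos.1 hc).ne]; ring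
    linarith
  set u := (-c)⁻¹ • (InnerProductSpace.toDual ℝ E).symm L
  have hu : ∀ y, -c * ⟪u, y⟫ = L y := fun y => by
    rw [real_inner_smul_left, InnerProductSpace.toDual_symm_apply, ← mul_assoc,
      mul_inv_cancel₀ hc.ne', one_mul]
  refine ⟨u, fun x _ => ?_, fun x hx => ?_⟩
  · refine le_of_mul_le_mul_left ?_ hc
    linarith [hu (x - x₀), map_sub L x x₀, hgraph x, hB x₀ hx₀]
  · rw [inner_neg_left, neg_nonpos]
    refine le_of_mul_le_mul_left ?_ hc
    linarith [hu (x - x₀), map_sub L x x₀, hgraph x₀, hB x hx]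

theorem IsSubgradientOn.exists_add_mem_normalCone [CompleteSpace E] {h : E → ℝ} {C : Set E}
    {x₀ c : E} (hc : IsSubgradientOn C h x₀ c) (hh : ConvexOn ℝ univ h) (hcont : Continuous h)
    (hC : Convex ℝ C) (hx₀ : x₀ ∈ C) :
    ∃ u w, IsSubgradientOn univ h x₀ u ∧ w ∈ normalCone C x₀ ∧ u + w = c := by
  have hlin : ConvexOn ℝ univ (h - fun x => ⟪c, x⟫) :=
    hh.sub ((innerₛₗ ℝ c).concaveOn convex_univ)
  have hmin : IsMinOn (h - fun x => ⟪c, x⟫) C x₀ := isMinOn_iff.2 fun x hx => by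
    have := hc x hx
    simp only [Pi.sub_apply, inner_sub_right] at this ⊢
    linarith
  obtain ⟨u, hu, hnu⟩ := hlin.exists_isSubgradientOn_univ_of_isMinOn
    (hcont.sub (continuous_const.inner continuous_id)) hC hx₀ hmin
  refine ⟨u + c, -u, fun x hx => ?_, hnu, by abel⟩
  have := hu x hx
  simp only [Pi.sub_apply, inner_add_left, inner_sub_right] at this ⊢
  linarith

theorem ConvexOn.isSubgradientOn_of_isMinOn_add_sq_norm {C : Set E} {F : E → ℝ}
    (hF : ConvexOn ℝ C F) {x₀ a : E} {γ : ℝ} (hx₀ : x₀ ∈ C)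
    (hmin : IsMinOn (fun x => F x + ‖x - a‖ ^ 2 / (2 * γ)) C x₀) :
    IsSubgradientOn C F x₀ (γ⁻¹ • (a - x₀)) := fun x hx => by
  have hL : ⟪γ⁻¹ • (a - x₀), x - x₀⟫ = -(⟪x₀ - a, x - x₀⟫ / γ) := by
    rw [real_inner_smul_left, ← neg_sub, inner_neg_left]; ring
  rw [hL, ← sub_eq_add_neg, sub_le_iff_le_add]
  refine hF.le_add_of_forall_le_add_mul_add_sq hx₀ hx (K := ‖x - x₀‖ ^ 2 / (2 * γ))
    fun t ht => ?_
  have hxt : x₀ + t • (x - x₀) ∈ C :=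
    hF.1.add_smul_sub_mem hx₀ hx ⟨ht.1.le, ht.2⟩
  have hexp : ‖x₀ + t • (x - x₀) - a‖ ^ 2
      = ‖x₀ - a‖ ^ 2 + 2 * (t * ⟪x₀ - a, x - x₀⟫) + t ^ 2 * ‖x - x₀‖ ^ 2 := by
    rw [show x₀ + t • (x - x₀) - a = (x₀ - a) + t • (x - x₀) by abel, norm_add_sq_real,
      real_inner_smul_right, norm_smul, mul_pow, Real.norm_eq_abs, sq_abs]
  have hdiv : (‖x₀ - a‖ ^ 2 + 2 * (t * ⟪x₀ - a, x - x₀⟫) + t ^ 2 * ‖x - x₀‖ ^ 2) / (2 * γ)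
      = ‖x₀ - a‖ ^ 2 / (2 * γ) + t * (⟪x₀ - a, x - x₀⟫ / γ)
        + t ^ 2 * (‖x - x₀‖ ^ 2 / (2 * γ)) := by ring
  have := isMinOn_iff.1 hmin _ hxt
  rw [hexp, hdiv] at this
  linarith

end Subgradient

theorem convex_setOf_forall_nonpos {E ι : Type*} [AddCommGroup E] [Module ℝ E] {g : ι → E → ℝ}
    (hg : ∀ i, ConvexOn ℝ univ (g i)) : Convex ℝ {p | ∀ i, g i p ≤ 0} := by
  simpa only [ofPred_forall, sep_univ] using convex_iInter fun i => (hg i).convex_le 0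

theorem convexOn_marginal {E F : Type*} [AddCommGroup E] [Module ℝ E] [AddCommGroup F]
    [Module ℝ F] {K : Set (E × F)} (hK : Convex ℝ K) {f : F → ℝ} (hf : ConvexOn ℝ univ f)
    {C : Set E} (hC : Convex ℝ C) {V : E → ℝ}
    (hV : ∀ x ∈ C, ∃ y, (x, y) ∈ K ∧ V x = f y ∧ ∀ y', (x, y') ∈ K → V x ≤ f y') :
    ConvexOn ℝ C V := by
  refine ⟨hC, fun x₁ hx₁ x₂ hx₂ a b ha hb hab => ?_⟩
  obtain ⟨y₁, hy₁, hV₁, -⟩ := hV x₁ hx₁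
  obtain ⟨y₂, hy₂, hV₂, -⟩ := hV x₂ hx₂
  obtain ⟨-, -, -, hle⟩ := hV _ (hC hx₁ hx₂ ha hb hab)
  have hmem : (a • x₁ + b • x₂, a • y₁ + b • y₂) ∈ K := by
    simpa only [Prod.smul_mk, Prod.mk_add_mk] using hK hy₁ hy₂ ha hb hab
  calc V (a • x₁ + b • x₂) ≤ f (a • y₁ + b • y₂) := hle _ hmem
    _ ≤ a • f y₁ + b • f y₂ := hf.2 trivial trivial ha hb hab
    _ = a • V x₁ + b • V x₂ := by rw [hV₁, hV₂]

theorem isSubgradientOn_marginal_of_isMinOn_add_sq_norm {E F : Type*} [NormedAddCommGroup E]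
    [InnerProductSpace ℝ E] [AddCommGroup F] [Module ℝ F] {K : Set (E × F)} (hK : Convex ℝ K)
    {f : F → ℝ} (hf : ConvexOn ℝ univ f) {C : Set E} (hC : Convex ℝ C) {V : E → ℝ}
    (hV : ∀ x ∈ C, ∃ y, (x, y) ∈ K ∧ V x = f y ∧ ∀ y', (x, y') ∈ K → V x ≤ f y')
    {x₀ a : E} {y₀ : F} {γ : ℝ} (hx₀ : x₀ ∈ C) (hy₀ : (x₀, y₀) ∈ K)
    (hmin : ∀ x ∈ C, ∀ y, (x, y) ∈ K →
      f y₀ + ‖x₀ - a‖ ^ 2 / (2 * γ) ≤ f y + ‖x - a‖ ^ 2 / (2 * γ)) :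
    IsSubgradientOn C V x₀ (γ⁻¹ • (a - x₀)) := by
  refine (convexOn_marginal hK hf hC hV).isSubgradientOn_of_isMinOn_add_sq_norm hx₀
    (isMinOn_iff.2 fun x hx => ?_)
  obtain ⟨y, hy, hVy, -⟩ := hV x hx
  obtain ⟨-, -, -, hV₀⟩ := hV x₀ hx₀
  linarith [hV₀ y₀ hy₀, hmin x hx y hy]

theorem one_div_smul_sum_const_sub {M : Type*} [AddCommGroup M] [Module ℝ M] {S : ℕ}
    (hS : (S : ℝ) ≠ 0) (m : M) (g : Fin S → M) :
    (1 / (S : ℝ)) • ∑ s, (m - g s) = m - (1 / (S : ℝ)) • ∑ s, g s := by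
  rw [Finset.sum_sub_distrib, Finset.sum_const, Finset.card_univ, Fintype.card_fin, smul_sub,
    ← Nat.cast_smul_eq_nsmul ℝ, smul_smul, one_div_mul_cancel hS, one_smul]

theorem exists_one_div_mul_sum_eq_norm_sub_sq_add {E : Type*} [NormedAddCommGroup E]
    [InnerProductSpace ℝ E] {S : ℕ} (hS : (S : ℝ) ≠ 0) {γ : ℝ} (hγ : γ ≠ 0) (k : Fin S → ℝ)
    (b : Fin S → E) (z : E) :
    ∃ K, ∀ x, (1 / (S : ℝ)) * ∑ s, (‖x‖ ^ 2 / (2 * γ) - k s - ⟪b s, x - z⟫)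
      = ‖x - γ • (1 / (S : ℝ)) • ∑ s, b s‖ ^ 2 / (2 * γ) + K := by
  set bbar := (1 / (S : ℝ)) • ∑ s, b s
  refine ⟨⟪bbar, z⟫ - (1 / (S : ℝ)) * ∑ s, k s - γ / 2 * ‖bbar‖ ^ 2, fun x => ?_⟩
  have havg : (1 / (S : ℝ)) * ∑ s, (‖x‖ ^ 2 / (2 * γ) - k s - ⟪b s, x - z⟫)
      = ‖x‖ ^ 2 / (2 * γ) - ((1 / (S : ℝ)) * ∑ s, k s + ⟪bbar, x - z⟫) := by
    simp only [sub_sub, ← smul_eq_mul (a := 1 / (S : ℝ))]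
    rw [one_div_smul_sum_const_sub hS, Finset.sum_add_distrib, smul_add, ← sum_inner,
      smul_eq_mul, smul_eq_mul, real_inner_smul_left]
  rw [havg, norm_sub_sq_real, inner_smul_right, norm_smul, mul_pow, Real.norm_eq_abs, sq_abs,
    inner_sub_right, real_inner_comm]
  field_simp
  ring

theorem stmt10_general {n₁ n₂ ℓ S : ℕ} (hS : 0 < S)
    (φ : EuclideanSpace ℝ (Fin n₁) → ℝ) (hφ : ConvexOn ℝ Set.univ φ)
    (X Xb : Set (EuclideanSpace ℝ (Fin n₁)))
    (hXconv : Convex ℝ X)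
    (hXbconv : Convex ℝ Xb)
    (hXint : X ⊆ interior Xb)
    (f : Fin S → EuclideanSpace ℝ (Fin n₁) → EuclideanSpace ℝ (Fin n₂) → ℝ)
    (hfconv : ∀ s x, ConvexOn ℝ Set.univ (fun y => f s x y))
    (G : Fin S → EuclideanSpace ℝ (Fin n₁) → EuclideanSpace ℝ (Fin n₂) → Fin ℓ → ℝ)
    (hG : ∀ s i, ConvexOn ℝ Set.univ
      (fun p : EuclideanSpace ℝ (Fin n₁) × EuclideanSpace ℝ (Fin n₂) => G s p.1 p.2 i))
    (ψb : Fin S → EuclideanSpace ℝ (Fin n₁) → EuclideanSpace ℝ (Fin n₁) → ℝ)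
    (hA : ∀ s, ∀ x ∈ Xb, ∀ z ∈ Xb, ∃ y : EuclideanSpace ℝ (Fin n₂),
      (∀ i, G s x y i ≤ 0) ∧ ψb s x z = f s z y ∧
      ∀ y' : EuclideanSpace ℝ (Fin n₂), (∀ i, G s x y' i ≤ 0) → ψb s x z ≤ f s z y')
    (γ ε : ℝ) (hγ : 0 < γ)
    (z : EuclideanSpace ℝ (Fin n₁)) (hz : z ∈ X)
    (xs : Fin S → EuclideanSpace ℝ (Fin n₁))
    (ys : Fin S → EuclideanSpace ℝ (Fin n₂))
    (cs : Fin S → EuclideanSpace ℝ (Fin n₁))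
    (hxs : ∀ s, xs s ∈ Xb)
    (hfeas : ∀ s i, G s (xs s) (ys s) i ≤ 0)
    (hmin : ∀ s, ∀ x ∈ Xb, ∀ y : EuclideanSpace ℝ (Fin n₂), (∀ i, G s x y i ≤ 0) →
      f s z (ys s) + ‖xs s - z‖ ^ 2 / (2 * γ) ≤ f s z y + ‖x - z‖ ^ 2 / (2 * γ))
    (xplus : EuclideanSpace ℝ (Fin n₁)) (hxplusX : xplus ∈ X)
    (hxplus : ∀ x ∈ X,
      φ xplus + (1 / (S : ℝ)) * ∑ s : Fin S,
        (‖xplus‖ ^ 2 / (2 * γ) - (‖z‖ ^ 2 / (2 * γ) - penv Xb (f s) (G s) γ z)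
          - ⟪(1 / γ) • xs s + cs s, xplus - z⟫)
      ≤ φ x + (1 / (S : ℝ)) * ∑ s : Fin S,
        (‖x‖ ^ 2 / (2 * γ) - (‖z‖ ^ 2 / (2 * γ) - penv Xb (f s) (G s) γ z)
          - ⟪(1 / γ) • xs s + cs s, x - z⟫))
    (hstop : ‖xplus - z‖ ≤ ε * γ) :
    ∃ (a nn : Fin S → EuclideanSpace ℝ (Fin n₁)) (u w : EuclideanSpace ℝ (Fin n₁)),
      (∀ s, ∀ x' ∈ Xb, ψb s x' z ≥ ψb s (xs s) z + ⟪a s, x' - xs s⟫) ∧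
      (∀ s, ∀ x ∈ Xb, ⟪nn s, x - xs s⟫ ≤ 0) ∧
      (∀ x' : EuclideanSpace ℝ (Fin n₁), φ x' ≥ φ xplus + ⟪u, x' - xplus⟫) ∧
      (∀ x ∈ X, ⟪w, x - xplus⟫ ≤ 0) ∧
      ‖(1 / (S : ℝ)) • (∑ s : Fin S, (a s - cs s + nn s)) + u + w‖ ≤ ε := by
  have hS' : (S : ℝ) ≠ 0 := Nat.cast_ne_zero.2 hS.ne'
  have hzXb : z ∈ Xb := interior_subset (hXint hz)
  have ha : ∀ s, IsSubgradientOn Xb (ψb s · z) (xs s) (γ⁻¹ • (z - xs s)) := fun s =>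
    isSubgradientOn_marginal_of_isMinOn_add_sq_norm (convex_setOf_forall_nonpos (hG s))
      (hfconv s z) hXbconv (fun x hx => hA s x hx z hzXb) (hxs s) (hfeas s) (hmin s)
  set bbar := (1 / (S : ℝ)) • ∑ s, ((1 / γ) • xs s + cs s)
  obtain ⟨K, hK⟩ := exists_one_div_mul_sum_eq_norm_sub_sq_add hS' hγ.ne'
    (fun s => ‖z‖ ^ 2 / (2 * γ) - penv Xb (f s) (G s) γ z) (fun s => (1 / γ) • xs s + cs s) z
  have hprox : IsMinOn (fun x => φ x + ‖x - γ • bbar‖ ^ 2 / (2 * γ)) X xplus :=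
    isMinOn_iff.2 fun x hx => by linarith [hK x, hK xplus, hxplus x hx]
  obtain ⟨u, w, hu, hw, huw⟩ :=
    ((hφ.subset (subset_univ X) hXconv).isSubgradientOn_of_isMinOn_add_sq_norm hxplusX
      hprox).exists_add_mem_normalCone hφ (continuousOn_univ.1 (hφ.continuousOn isOpen_univ))
      hXconv hxplusX
  refine ⟨fun s => γ⁻¹ • (z - xs s), 0, u, w, ha, fun _ _ _ => by simp, fun x => hu x trivial,
    hw, ?_⟩
  have havg : (1 / (S : ℝ)) • ∑ s, (γ⁻¹ • (z - xs s) - cs s + 0) = γ⁻¹ • z - bbar := by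
    rw [Finset.sum_congr rfl fun s _ => show γ⁻¹ • (z - xs s) - cs s + 0
      = γ⁻¹ • z - ((1 / γ) • xs s + cs s) by module, one_div_smul_sum_const_sub hS']
  calc _ = ‖γ⁻¹ • (z - xplus)‖ := by
        simp only [add_assoc, huw, Pi.zero_apply]
        rw [havg, smul_sub γ⁻¹ (γ • bbar), smul_smul, inv_mul_cancel₀ hγ.ne', one_smul, smul_sub]
        congr 1
        abel
    _ ≤ ε := by
        rw [norm_smul, norm_inv, Real.norm_of_nonneg hγ.le, norm_sub_rev, inv_mul_le_iff₀ hγ]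
        linarith

theorem stmt10 {n₁ n₂ ℓ S : ℕ} (hS : 0 < S)
    (φ : EuclideanSpace ℝ (Fin n₁) → ℝ) (hφ : ConvexOn ℝ Set.univ φ)
    (X Xb : Set (EuclideanSpace ℝ (Fin n₁)))
    (hXne : X.Nonempty) (hXconv : Convex ℝ X) (hXcomp : IsCompact X)
    (hXbne : Xb.Nonempty) (hXbconv : Convex ℝ Xb) (hXbcomp : IsCompact Xb)
    (hXint : X ⊆ interior Xb)
    (f : Fin S → EuclideanSpace ℝ (Fin n₁) → EuclideanSpace ℝ (Fin n₂) → ℝ)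
    (hfconc : ∀ s y, ConcaveOn ℝ Set.univ (fun x => f s x y))
    (hfconv : ∀ s x, ConvexOn ℝ Set.univ (fun y => f s x y))
    (G : Fin S → EuclideanSpace ℝ (Fin n₁) → EuclideanSpace ℝ (Fin n₂) → Fin ℓ → ℝ)
    (hG : ∀ s i, ConvexOn ℝ Set.univ
      (fun p : EuclideanSpace ℝ (Fin n₁) × EuclideanSpace ℝ (Fin n₂) => G s p.1 p.2 i))
    (ψb : Fin S → EuclideanSpace ℝ (Fin n₁) → EuclideanSpace ℝ (Fin n₁) → ℝ)
    (hA : ∀ s, ∀ x ∈ Xb, ∀ z ∈ Xb, ∃ y : EuclideanSpace ℝ (Fin n₂),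
      (∀ i, G s x y i ≤ 0) ∧ ψb s x z = f s z y ∧
      ∀ y' : EuclideanSpace ℝ (Fin n₂), (∀ i, G s x y' i ≤ 0) → ψb s x z ≤ f s z y')
    (κ : Fin S → ℝ) (hκ : ∀ s, 0 ≤ κ s)
    (hB : ∀ s, ∀ z ∈ X, ∀ x₁ ∈ Xb, ∀ x₂ ∈ Xb,
      |ψb s x₁ z - ψb s x₂ z| ≤ κ s * ‖x₁ - x₂‖)
    (γ ε : ℝ) (hγ : 0 < γ) (hε : 0 < ε)
    (z : EuclideanSpace ℝ (Fin n₁)) (hz : z ∈ X)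
    (xs : Fin S → EuclideanSpace ℝ (Fin n₁))
    (ys : Fin S → EuclideanSpace ℝ (Fin n₂))
    (cs : Fin S → EuclideanSpace ℝ (Fin n₁))
    (hxs : ∀ s, xs s ∈ Xb)
    (hfeas : ∀ s i, G s (xs s) (ys s) i ≤ 0)
    (hmin : ∀ s, ∀ x ∈ Xb, ∀ y : EuclideanSpace ℝ (Fin n₂), (∀ i, G s x y i ≤ 0) →
      f s z (ys s) + ‖xs s - z‖ ^ 2 / (2 * γ) ≤ f s z y + ‖x - z‖ ^ 2 / (2 * γ))
    (hc : ∀ s, ∀ z' : EuclideanSpace ℝ (Fin n₁),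
      -f s z' (ys s) ≥ -f s z (ys s) + ⟪cs s, z' - z⟫)
    (xplus : EuclideanSpace ℝ (Fin n₁)) (hxplusX : xplus ∈ X)
    (hxplus : ∀ x ∈ X,
      φ xplus + (1 / (S : ℝ)) * ∑ s : Fin S,
        (‖xplus‖ ^ 2 / (2 * γ) - (‖z‖ ^ 2 / (2 * γ) - penv Xb (f s) (G s) γ z)
          - ⟪(1 / γ) • xs s + cs s, xplus - z⟫)
      ≤ φ x + (1 / (S : ℝ)) * ∑ s : Fin S,
        (‖x‖ ^ 2 / (2 * γ) - (‖z‖ ^ 2 / (2 * γ) - penv Xb (f s) (G s) γ z)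
          - ⟪(1 / γ) • xs s + cs s, x - z⟫))
    (hstop : ‖xplus - z‖ ≤ ε * γ) :
    ∃ (a nn : Fin S → EuclideanSpace ℝ (Fin n₁)) (u w : EuclideanSpace ℝ (Fin n₁)),
      (∀ s, ∀ x' ∈ Xb, ψb s x' z ≥ ψb s (xs s) z + ⟪a s, x' - xs s⟫) ∧
      (∀ s, ∀ x ∈ Xb, ⟪nn s, x - xs s⟫ ≤ 0) ∧
      (∀ x' : EuclideanSpace ℝ (Fin n₁), φ x' ≥ φ xplus + ⟪u, x' - xplus⟫) ∧
      (∀ x ∈ X, ⟪w, x - xplus⟫ ≤ 0) ∧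
      ‖(1 / (S : ℝ)) • (∑ s : Fin S, (a s - cs s + nn s)) + u + w‖ ≤ ε :=
  stmt10_general hS φ hφ X Xb hXconv hXbconv hXint f hfconv G hG ψb hA γ ε hγ z hz xs ys cs hxs
    hfeas hmin xplus hxplusX hxplus hstop
end

section
/- Convergence of proximal points as the parameter vanishes (core of Lemma 4.2/5.2): let D ⊆ ℝⁿ be a nonempty compact set with diameter R = sup_{u,v∈D} ‖u − v‖, let X ⊆ D, let θ̄ : D × X → ℝ and κ ≥ 0 satisfy |θ̄(x₁,z) − θ̄(x₂,z)| ≤ κ ‖x₁ − x₂‖ for all x₁, x₂ ∈ D and z ∈ X. Let z_k ∈ X with z_k → x̄ ∈ D, let γ_k > 0 with γ_k → 0, and for each k let p_k ∈ D minimize x ↦ θ̄(x, z_k) + ‖x − z_k‖²/(2γ_k) over D. Then ‖p_k − x̄‖ ≤ 2 ‖z_k − x̄‖ + √( 2 γ_k κ R ) for every k, and consequently p_k → x̄. -/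
open scoped RealInnerProductSpace
open Filter Topology

/-! Comparing the proximal point `p` with the competitor `z` gives
`‖p - z‖² / (2γ) ≤ θ(z) - θ(p) ≤ κ ‖p - z‖ ≤ κ R`, so `‖p - z‖ ≤ √(2γκR)`; the triangle
inequality through `z` then bounds `‖p - x̄‖`, and the bound tends to `0` with `z` and `γ`. -/

section Prox

variable {E : Type*} [SeminormedAddCommGroup E] {D : Set E} {f : E → ℝ} {κ γ : ℝ} {p z : E}

theorem sq_norm_sub_le_of_isMinOn_prox (hγ : 0 < γ) (hz : z ∈ D)
    (hlip : |f z - f p| ≤ κ * ‖z - p‖)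
    (hmin : IsMinOn (fun x => f x + ‖x - z‖ ^ 2 / (2 * γ)) D p) :
    ‖p - z‖ ^ 2 ≤ 2 * γ * κ * ‖p - z‖ := by
  have hcmp : f p + ‖p - z‖ ^ 2 / (2 * γ) ≤ f z := by
    simpa using isMinOn_iff.1 hmin z hz
  have hdiff : f z - f p ≤ κ * ‖p - z‖ := by
    rw [← norm_sub_rev]
    exact (le_abs_self _).trans hlip
  have hstep : ‖p - z‖ ^ 2 / (2 * γ) ≤ κ * ‖p - z‖ := by linarith
  rw [div_le_iff₀ (by positivity)] at hstep
  linarith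

theorem norm_sub_le_sqrt_of_isMinOn_prox (hγ : 0 < γ) (hκ : 0 ≤ κ)
    (hD : Bornology.IsBounded D) (hp : p ∈ D) (hz : z ∈ D)
    (hlip : ∀ x₁ ∈ D, ∀ x₂ ∈ D, |f x₁ - f x₂| ≤ κ * ‖x₁ - x₂‖)
    (hmin : IsMinOn (fun x => f x + ‖x - z‖ ^ 2 / (2 * γ)) D p) :
    ‖p - z‖ ≤ √(2 * γ * κ * Metric.diam D) := by
  have hdiam : ‖p - z‖ ≤ Metric.diam D := by
    rw [← dist_eq_norm]
    exact Metric.dist_le_diam_of_mem hD hp hz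
  have hsq : ‖p - z‖ ^ 2 ≤ 2 * γ * κ * Metric.diam D :=
    (sq_norm_sub_le_of_isMinOn_prox hγ hz (hlip z hz p hp) hmin).trans
      (mul_le_mul_of_nonneg_left hdiam (by positivity))
  exact Real.le_sqrt_of_sq_le hsq

theorem norm_sub_le_two_mul_add_sqrt_of_isMinOn_prox (x : E) (hγ : 0 < γ) (hκ : 0 ≤ κ)
    (hD : Bornology.IsBounded D) (hp : p ∈ D) (hz : z ∈ D)
    (hlip : ∀ x₁ ∈ D, ∀ x₂ ∈ D, |f x₁ - f x₂| ≤ κ * ‖x₁ - x₂‖)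
    (hmin : IsMinOn (fun x => f x + ‖x - z‖ ^ 2 / (2 * γ)) D p) :
    ‖p - x‖ ≤ 2 * ‖z - x‖ + √(2 * γ * κ * Metric.diam D) :=
  calc ‖p - x‖ ≤ ‖p - z‖ + ‖z - x‖ := norm_sub_le_norm_sub_add_norm_sub _ _ _
    _ ≤ √(2 * γ * κ * Metric.diam D) + ‖z - x‖ := by
        gcongr
        exact norm_sub_le_sqrt_of_isMinOn_prox hγ hκ hD hp hz hlip hmin
    _ ≤ 2 * ‖z - x‖ + √(2 * γ * κ * Metric.diam D) := by linarith [norm_nonneg (z - x)]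

end Prox

theorem stmt12_general {n : ℕ}
    (D X : Set (EuclideanSpace ℝ (Fin n)))
    (hDcomp : IsCompact D) (hXD : X ⊆ D)
    (θb : EuclideanSpace ℝ (Fin n) → EuclideanSpace ℝ (Fin n) → ℝ)
    (κ : ℝ) (hκ : 0 ≤ κ)
    (hlip : ∀ z ∈ X, ∀ x₁ ∈ D, ∀ x₂ ∈ D, |θb x₁ z - θb x₂ z| ≤ κ * ‖x₁ - x₂‖)
    (zk : ℕ → EuclideanSpace ℝ (Fin n)) (hzk : ∀ k, zk k ∈ X)
    (xb : EuclideanSpace ℝ (Fin n))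
    (hzlim : Tendsto zk atTop (𝓝 xb))
    (γk : ℕ → ℝ) (hγk : ∀ k, 0 < γk k) (hγlim : Tendsto γk atTop (𝓝 0))
    (pk : ℕ → EuclideanSpace ℝ (Fin n)) (hpk : ∀ k, pk k ∈ D)
    (hpkmin : ∀ k, ∀ x ∈ D,
      θb (pk k) (zk k) + ‖pk k - zk k‖ ^ 2 / (2 * γk k)
        ≤ θb x (zk k) + ‖x - zk k‖ ^ 2 / (2 * γk k)) :
    (∀ k, ‖pk k - xb‖ ≤ 2 * ‖zk k - xb‖ + Real.sqrt (2 * γk k * κ * Metric.diam D)) ∧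
    Tendsto pk atTop (𝓝 xb) := by
  have hbound : ∀ k, ‖pk k - xb‖ ≤ 2 * ‖zk k - xb‖ + √(2 * γk k * κ * Metric.diam D) :=
    fun k => norm_sub_le_two_mul_add_sqrt_of_isMinOn_prox xb (hγk k) hκ hDcomp.isBounded
      (hpk k) (hXD (hzk k)) (hlip (zk k) (hzk k)) (isMinOn_iff.2 (hpkmin k))
  refine ⟨hbound, tendsto_iff_norm_sub_tendsto_zero.2 ?_⟩
  have hrhs : Tendsto (fun k => 2 * ‖zk k - xb‖ + √(2 * γk k * κ * Metric.diam D))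
      atTop (𝓝 0) := by
    simpa using ((tendsto_iff_norm_sub_tendsto_zero.1 hzlim).const_mul 2).add
      (((hγlim.const_mul 2).mul_const κ).mul_const (Metric.diam D)).sqrt
  exact squeeze_zero (fun _ => norm_nonneg _) hbound hrhs

theorem stmt12 {n : ℕ}
    (D X : Set (EuclideanSpace ℝ (Fin n)))
    (hDne : D.Nonempty) (hDcomp : IsCompact D) (hXD : X ⊆ D)
    (θb : EuclideanSpace ℝ (Fin n) → EuclideanSpace ℝ (Fin n) → ℝ)
    (κ : ℝ) (hκ : 0 ≤ κ)
    (hlip : ∀ z ∈ X, ∀ x₁ ∈ D, ∀ x₂ ∈ D, |θb x₁ z - θb x₂ z| ≤ κ * ‖x₁ - x₂‖)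
    (zk : ℕ → EuclideanSpace ℝ (Fin n)) (hzk : ∀ k, zk k ∈ X)
    (xb : EuclideanSpace ℝ (Fin n)) (hxb : xb ∈ D)
    (hzlim : Tendsto zk atTop (𝓝 xb))
    (γk : ℕ → ℝ) (hγk : ∀ k, 0 < γk k) (hγlim : Tendsto γk atTop (𝓝 0))
    (pk : ℕ → EuclideanSpace ℝ (Fin n)) (hpk : ∀ k, pk k ∈ D)
    (hpkmin : ∀ k, ∀ x ∈ D,
      θb (pk k) (zk k) + ‖pk k - zk k‖ ^ 2 / (2 * γk k)
        ≤ θb x (zk k) + ‖x - zk k‖ ^ 2 / (2 * γk k)) :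
    (∀ k, ‖pk k - xb‖ ≤ 2 * ‖zk k - xb‖ + Real.sqrt (2 * γk k * κ * Metric.diam D)) ∧
    Tendsto pk atTop (𝓝 xb) :=
  stmt12_general D X hDcomp hXD θb κ hκ hlip zk hzk xb hzlim γk hγk hγlim pk hpk hpkmin
end

section
/- Subsequential convergence of Algorithm 1 to a critical point (Theorem 4.1): under Assumptions A and B, let {γ_ν} and {ε_ν} be positive sequences decreasing to 0, let x₀ ∈ X, and let the sequences {x_ν}, {x_{ν,i}}, {x^s_{ν,i}}, {c^s_{ν,i}} be produced by Algorithm 1: for each ν set x_{ν,0} = x_ν; for each i, take subproblem solutions (x^s_{ν,i}, y^s_{ν,i}, c^s_{ν,i}) at z = x_{ν,i} with parameter γ_ν for every scenario s, and let x_{ν,i+1} minimize x ↦ φ(x) + (1/S) Σ_{s=1}^S [ ‖x‖²/(2γ_ν) − ( ‖x_{ν,i}‖²/(2γ_ν) − e_{γ_ν}ψ_s(x_{ν,i}) ) − ⟨ x^s_{ν,i}/γ_ν + c^s_{ν,i}, x − x_{ν,i} ⟩ ] over X; let i_ν be the first index i with ‖x_{ν,i+1} − x_{ν,i}‖ ≤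 ε_ν γ_ν (which is finite), and set x_{ν+1} = x_{ν,i_ν+1}. Then every accumulation point x̄ of {x_ν} is a critical point of the problem min_{x∈X} φ(x) + (1/S) Σ_{s=1}^S ψ̄_s(x,x): there exist u ∈ ∂φ(x̄), w ∈ N_X(x̄), and for each s vectors a^s ∈ ∂₁ψ̄_s(x̄,x̄) and b^s ∈ ∂₂(−ψ̄_s)(x̄,x̄), such that u + (1/S) Σ_{s=1}^S ( a^s − b^s ) + w = 0. -/
open scoped RealInnerProductSpace
open Filter Topology

/-- limit t → 0⁺ -/
lemma aux_le_of_small (a b c : ℝ) (h : ∀ t : ℝ, 0 < t → t ≤ 1 → b ≤ a + t * c) : b ≤ a := by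
  have ht : Tendsto (fun t : ℝ => a + t * c) (𝓝[>] (0:ℝ)) (𝓝 a) := by
    have : Tendsto (fun t : ℝ => a + t * c) (𝓝 (0:ℝ)) (𝓝 (a + 0 * c)) := by
      exact (continuous_const.add (continuous_id.mul continuous_const)).tendsto 0
    simpa using this.mono_left nhdsWithin_le_nhds
  refine ge_of_tendsto ht ?_
  filter_upwards [Ioc_mem_nhdsGT_of_mem (Set.mem_Ico.mpr ⟨le_rfl, zero_lt_one⟩)] with t htt
  exact h t htt.1 htt.2

/-- expansion of a vector in the single basis -/
lemma aux_sum_single {n : ℕ} (v : EuclideanSpace ℝ (Fin n)) :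
    ∑ i : Fin n, v i • EuclideanSpace.single i (1:ℝ) = v := by
  have h := (EuclideanSpace.basisFun (Fin n) ℝ).sum_repr v
  simpa [EuclideanSpace.basisFun_repr, EuclideanSpace.basisFun_apply] using h

lemma aux_coord_le_norm {n : ℕ} (v : EuclideanSpace ℝ (Fin n)) (i : Fin n) : |v i| ≤ ‖v‖ := by
  have h := abs_real_inner_le_norm (EuclideanSpace.single i (1:ℝ)) v
  simpa [EuclideanSpace.inner_single_left, EuclideanSpace.norm_single] using h

/-- Jensen upper bound on a small ball around `c` from values at the cross points. -/
lemma aux_cross_bound {n : ℕ} {s : Set (EuclideanSpace ℝ (Fin n))}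
    {h : EuclideanSpace ℝ (Fin n) → ℝ}
    (hc : ConvexOn ℝ s h) (c : EuclideanSpace ℝ (Fin n)) (ρ M : ℝ) (hρ : 0 < ρ)
    (hsub : ∀ p : EuclideanSpace ℝ (Fin n), dist p c ≤ ρ → p ∈ s)
    (hM0 : h c ≤ M)
    (hMi : ∀ i : Fin n, ∀ e : ℝ, |e| = ρ → h (c + e • EuclideanSpace.single i (1:ℝ)) ≤ M)
    (x : EuclideanSpace ℝ (Fin n)) (hx : dist x c ≤ ρ / (n + 1)) : h x ≤ M := by
  classical
  set v : EuclideanSpace ℝ (Fin n) := x - c with hv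
  have hnv : ‖v‖ ≤ ρ / (n + 1) := by
    rw [hv]; rw [dist_eq_norm] at hx; exact hx
  set sgn : Fin n → ℝ := fun i => if 0 ≤ v i then (1:ℝ) else -1 with hsgn
  set w : Option (Fin n) → ℝ := fun o => o.elim (1 - ∑ i : Fin n, |v i| / ρ) (fun i => |v i| / ρ)
    with hw
  set z : Option (Fin n) → EuclideanSpace ℝ (Fin n) :=
    fun o => o.elim c (fun i => c + (ρ * sgn i) • EuclideanSpace.single i (1:ℝ)) with hz
  have hsum_abs : ∑ i : Fin n, |v i| ≤ n * ‖v‖ := by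
    calc ∑ i : Fin n, |v i| ≤ ∑ _i : Fin n, ‖v‖ :=
          Finset.sum_le_sum fun i _ => aux_coord_le_norm v i
      _ = n * ‖v‖ := by simp [mul_comm]
  have hsum_lt : ∑ i : Fin n, |v i| / ρ ≤ 1 := by
    rw [← Finset.sum_div, div_le_one hρ]
    calc ∑ i : Fin n, |v i| ≤ n * ‖v‖ := hsum_abs
      _ ≤ n * (ρ / (n + 1)) := by
          exact mul_le_mul_of_nonneg_left hnv (by positivity)
      _ ≤ ρ := by
          rw [mul_div_assoc', div_le_iff₀ (by positivity : (0:ℝ) < (n:ℝ) + 1)]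
          nlinarith [hρ.le, Nat.cast_nonneg (α := ℝ) n]
  have hw0 : ∀ o : Option (Fin n), 0 ≤ w o := by
    rintro (_ | i)
    · simpa [hw] using hsum_lt
    · simp [hw]; positivity
  have hw1 : ∑ o : Option (Fin n), w o = 1 := by
    rw [Fintype.sum_option]; simp [hw]
  have hzmem : ∀ o : Option (Fin n), z o ∈ s := by
    rintro (_ | i)
    · exact hsub c (by simpa using hρ.le)
    · refine hsub _ ?_
      have hd : dist (c + (ρ * sgn i) • EuclideanSpace.single i (1:ℝ)) c
          = ‖(ρ * sgn i) • EuclideanSpace.single i (1:ℝ)‖ := by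
        rw [dist_eq_norm, add_sub_cancel_left]
      have hs1 : |sgn i| = 1 := by by_cases hvi : 0 ≤ v i <;> simp [hsgn, hvi]
      rw [show z (some i) = c + (ρ * sgn i) • EuclideanSpace.single i (1:ℝ) from rfl, hd,
        norm_smul, EuclideanSpace.norm_single]
      simp [abs_mul, hs1, abs_of_pos hρ]
  have hxz : ∑ o : Option (Fin n), w o • z o = x := by
    rw [Fintype.sum_option]
    have hterm : ∀ i : Fin n, w (some i) • z (some i)
        = (|v i| / ρ) • c + (v i) • EuclideanSpace.single i (1:ℝ) := by
      intro i
      have h1 : (|v i| / ρ) * (ρ * sgn i) = v i := by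
        by_cases hvi : 0 ≤ v i
        · simp only [hsgn, if_pos hvi]; rw [abs_of_nonneg hvi]; field_simp
        · simp only [hsgn, if_neg hvi]; rw [abs_of_neg (not_le.mp hvi)]; field_simp
      simp only [hw, hz, Option.elim]
      rw [smul_add, smul_smul, h1]
    rw [Finset.sum_congr rfl (fun i _ => hterm i)]
    rw [Finset.sum_add_distrib]
    simp only [hw, hz, Option.elim]
    rw [← Finset.sum_smul, aux_sum_single]
    have : (1 - ∑ i : Fin n, |v i| / ρ) • c + ((∑ i : Fin n, |v i| / ρ) • c + v) = c + v := by
      module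
    rw [this, hv]; abel
  have hjen := hc.map_sum_le (t := Finset.univ) (w := w) (p := z)
    (fun o _ => hw0 o) (by simpa using hw1) (fun o _ => hzmem o)
  rw [show ∑ o ∈ Finset.univ, w o • z o = x from hxz] at hjen
  calc h x ≤ ∑ o : Option (Fin n), w o * h (z o) := hjen
    _ ≤ ∑ o : Option (Fin n), w o * M := by
        refine Finset.sum_le_sum fun o _ => mul_le_mul_of_nonneg_left ?_ (hw0 o)
        rcases o with _ | i
        · simpa [hz] using hM0
        · exact hMi i (ρ * sgn i) (by
            have hs1 : |sgn i| = 1 := by by_cases hvi : 0 ≤ v i <;> simp [hsgn, hvi]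
            rw [abs_mul, hs1, abs_of_pos hρ, mul_one])
    _ = M := by rw [← Finset.sum_mul, hw1, one_mul]

lemma aux_subgrad_split {n : ℕ} (φ : EuclideanSpace ℝ (Fin n) → ℝ)
    (hφ : ConvexOn ℝ Set.univ φ) (X : Set (EuclideanSpace ℝ (Fin n)))
    (hX : Convex ℝ X) (xb : EuclideanSpace ℝ (Fin n)) (hxb : xb ∈ X)
    (g : EuclideanSpace ℝ (Fin n)) (hg : ∀ x ∈ X, φ xb + ⟪g, x - xb⟫ ≤ φ x) :
    ∃ u w : EuclideanSpace ℝ (Fin n),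
      (∀ x', φ xb + ⟪u, x' - xb⟫ ≤ φ x') ∧ (∀ x ∈ X, ⟪w, x - xb⟫ ≤ 0) ∧ u + w = g := by
  classical
  have hφc : Continuous φ := by
    have h := hφ.continuousOn isOpen_univ
    exact continuousOn_univ.mp h
  set F : EuclideanSpace ℝ (Fin n) → ℝ := fun x => φ x - ⟪g, x⟫ - (φ xb - ⟪g, xb⟫) with hF
  have hFcont : Continuous F := by
    exact (hφc.sub (continuous_const.inner continuous_id)).sub continuous_const
  have hFxb : F xb = 0 := by simp [hF]
  have hFX : ∀ x ∈ X, 0 ≤ F x := by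
    intro x hx
    have := hg x hx
    rw [inner_sub_right] at this
    simp only [hF]; linarith
  have hFconv : ∀ x y : EuclideanSpace ℝ (Fin n), ∀ a b : ℝ, 0 ≤ a → 0 ≤ b → a + b = 1 →
      F (a • x + b • y) ≤ a * F x + b * F y := by
    intro x y a b ha hb hab
    have hφ2 := hφ.2 (Set.mem_univ x) (Set.mem_univ y) ha hb hab
    simp only [smul_eq_mul] at hφ2
    have hin : ⟪g, a • x + b • y⟫ = a * ⟪g, x⟫ + b * ⟪g, y⟫ := by
      rw [inner_add_right, real_inner_smul_right, real_inner_smul_right]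
    simp only [hF]
    have h1 : a * (φ xb - ⟪g, xb⟫) + b * (φ xb - ⟪g, xb⟫) = φ xb - ⟪g, xb⟫ := by
      rw [← add_mul, hab, one_mul]
    nlinarith [hφ2]
  set A : Set (EuclideanSpace ℝ (Fin n) × ℝ) := {p | F p.1 - p.2 < 0} with hA
  have hAopen : IsOpen A := by
    exact isOpen_lt ((hFcont.comp continuous_fst).sub continuous_snd) continuous_const
  have hAconv : Convex ℝ A := by
    intro p hp q hq a b ha hb hab
    simp only [hA, Set.mem_setOf_eq] at hp hq ⊢
    have hcomb := hFconv p.1 q.1 a b ha hb hab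
    have hsnd : (a • p + b • q).2 = a * p.2 + b * q.2 := rfl
    have hfst : (a • p + b • q).1 = a • p.1 + b • q.1 := rfl
    rw [hsnd, hfst]
    have hor : 0 < a ∨ 0 < b := by
      rcases ha.lt_or_eq with h | h
      · exact Or.inl h
      · right; linarith
    rcases hor with h | h
    · have h1 : a * F p.1 < a * p.2 := by nlinarith
      have h2 : b * F q.1 ≤ b * q.2 := by nlinarith
      linarith
    · have h1 : b * F q.1 < b * q.2 := by nlinarith
      have h2 : a * F p.1 ≤ a * p.2 := by nlinarith
      linarith
  set B : Set (EuclideanSpace ℝ (Fin n) × ℝ) := X ×ˢ Set.Iic (0:ℝ) with hB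
  have hBconv : Convex ℝ B := hX.prod (convex_Iic 0)
  have hdisj : Disjoint A B := by
    rw [Set.disjoint_left]
    rintro ⟨x, t⟩ hpA hpB
    simp only [hA, Set.mem_setOf_eq] at hpA
    simp only [hB, Set.mem_prod, Set.mem_Iic] at hpB
    have := hFX x hpB.1
    have h2 := hpB.2
    have hpA' : F x - t < 0 := hpA
    linarith
  obtain ⟨L, u0, hLA, hLB⟩ := geometric_hahn_banach_open hAconv hAopen hBconv hdisj
  set q : EuclideanSpace ℝ (Fin n) → ℝ := fun x => L (x, 0) with hq
  set α : ℝ := L (0, 1) with hα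
  have hLsplit : ∀ (x : EuclideanSpace ℝ (Fin n)) (t : ℝ), L (x, t) = q x + t * α := by
    intro x t
    have h1 : ((x, t) : EuclideanSpace ℝ (Fin n) × ℝ) = (x, 0) + t • (0, 1) := by
      simp [Prod.ext_iff]
    rw [h1, map_add, map_smul]
    simp [hq, hα, smul_eq_mul]
  have hA' : ∀ (x : EuclideanSpace ℝ (Fin n)) (t : ℝ), F x < t → q x + t * α < u0 := by
    intro x t hxt
    have : ((x, t) : EuclideanSpace ℝ (Fin n) × ℝ) ∈ A := by simp [hA]; linarith
    have := hLA _ this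
    rwa [hLsplit] at this
  have hB' : ∀ x ∈ X, u0 ≤ q x := by
    intro x hx
    have : ((x, 0) : EuclideanSpace ℝ (Fin n) × ℝ) ∈ B := by simp [hB, hx]
    have := hLB _ this
    rwa [hLsplit, zero_mul, add_zero] at this
  have hαneg : α < 0 := by
    rcases lt_trichotomy α 0 with h | h | h
    · exact h
    · exfalso
      have h1 := hA' xb (F xb + 1) (by linarith)
      have h2 := hB' xb hxb
      rw [h] at h1; simp at h1; linarith
    · exfalso
      set m : ℝ := max 1 ((u0 - q xb - F xb * α + 1) / α) with hm
      have hm1 : (1:ℝ) ≤ m := le_max_left _ _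
      have hm2 : (u0 - q xb - F xb * α + 1) / α ≤ m := le_max_right _ _
      have h1 := hA' xb (F xb + m) (by linarith)
      rw [div_le_iff₀ h] at hm2
      nlinarith [h1]
  have hkey : ∀ x : EuclideanSpace ℝ (Fin n), q x + F x * α ≤ u0 := by
    intro x
    refine le_of_forall_pos_le_add ?_
    intro ε hε
    have hpos : 0 < ε / (-α) := div_pos hε (by linarith)
    have h1 := hA' x (F x + ε / (-α)) (by linarith)
    have hne : α ≠ 0 := ne_of_lt hαneg
    have h2 : ε / -α * α = -ε := by
      rw [div_mul_eq_mul_div, mul_div_assoc, div_neg, div_self hne, mul_neg, mul_one]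
    have h3 : (F x + ε / -α) * α = F x * α + ε / -α * α := by ring
    rw [h3, h2] at h1
    linarith
  have hqxb : q xb = u0 := by
    have h1 := hB' xb hxb
    have h2 := hkey xb
    rw [hFxb] at h2; simp at h2; linarith
  set β : ℝ := -α with hβ
  have hβpos : 0 < β := by simp [hβ]; linarith
  set p0 : EuclideanSpace ℝ (Fin n) := (InnerProductSpace.toDual ℝ (EuclideanSpace ℝ (Fin n))).symm (L.comp (ContinuousLinearMap.inl ℝ (EuclideanSpace ℝ (Fin n)) ℝ))
    with hp0
  have hp0x : ∀ x : EuclideanSpace ℝ (Fin n), ⟪p0, x⟫ = q x := by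
    intro x
    rw [hp0, InnerProductSpace.toDual_symm_apply]
    simp [hq]
  have hqlin : ∀ x y : EuclideanSpace ℝ (Fin n), q (x - y) = q x - q y := by
    intro x y
    simp only [hq]
    rw [show ((x - y, (0:ℝ)) : EuclideanSpace ℝ (Fin n) × ℝ) = (x, 0) - (y, 0) by
      simp [Prod.ext_iff], map_sub]
  refine ⟨g + β⁻¹ • p0, -(β⁻¹ • p0), ?_, ?_, by abel⟩
  · intro x'
    have h1 := hkey x'
    have h2 : ⟪g + β⁻¹ • p0, x' - xb⟫ = ⟪g, x' - xb⟫ + β⁻¹ * (q x' - q xb) := by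
      rw [inner_add_left, real_inner_smul_left, hp0x, hqlin]
    rw [h2, inner_sub_right]
    have hFx : F x' = φ x' - ⟪g, x'⟫ - (φ xb - ⟪g, xb⟫) := rfl
    have h3 : q x' - q xb ≤ F x' * β := by
      rw [hqxb]; simp only [hβ]; nlinarith [h1]
    have h4 : β⁻¹ * (q x' - q xb) ≤ F x' := by
      rw [inv_mul_le_iff₀ hβpos, mul_comm]; exact h3
    linarith [h4, hFx ▸ le_refl (F x')]
  · intro x hx
    have h1 := hB' x hx
    rw [inner_neg_left, real_inner_smul_left, hp0x, hqlin, hqxb]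
    have h2 : 0 ≤ β⁻¹ * (q x - u0) :=
      mul_nonneg (inv_nonneg.mpr hβpos.le) (by linarith)
    linarith

set_option maxHeartbeats 2000000

theorem stmt15 {n₁ n₂ ℓ S : ℕ} (hS : 0 < S)
    (φ : EuclideanSpace ℝ (Fin n₁) → ℝ) (hφ : ConvexOn ℝ Set.univ φ)
    (X Xb : Set (EuclideanSpace ℝ (Fin n₁)))
    (hXne : X.Nonempty) (hXconv : Convex ℝ X) (hXcomp : IsCompact X)
    (hXbne : Xb.Nonempty) (hXbconv : Convex ℝ Xb) (hXbcomp : IsCompact Xb)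
    (hXint : X ⊆ interior Xb)
    (f : Fin S → EuclideanSpace ℝ (Fin n₁) → EuclideanSpace ℝ (Fin n₂) → ℝ)
    (hfconc : ∀ s y, ConcaveOn ℝ Set.univ (fun x => f s x y))
    (hfconv : ∀ s x, ConvexOn ℝ Set.univ (fun y => f s x y))
    (G : Fin S → EuclideanSpace ℝ (Fin n₁) → EuclideanSpace ℝ (Fin n₂) → Fin ℓ → ℝ)
    (hG : ∀ s i, ConvexOn ℝ Set.univ
      (fun p : EuclideanSpace ℝ (Fin n₁) × EuclideanSpace ℝ (Fin n₂) => G s p.1 p.2 i))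
    (ψb : Fin S → EuclideanSpace ℝ (Fin n₁) → EuclideanSpace ℝ (Fin n₁) → ℝ)
    (hA : ∀ s, ∀ x ∈ Xb, ∀ z ∈ Xb, ∃ y : EuclideanSpace ℝ (Fin n₂),
      (∀ i, G s x y i ≤ 0) ∧ ψb s x z = f s z y ∧
      ∀ y' : EuclideanSpace ℝ (Fin n₂), (∀ i, G s x y' i ≤ 0) → ψb s x z ≤ f s z y')
    (κ : Fin S → ℝ) (hκ : ∀ s, 0 ≤ κ s)
    (hB : ∀ s, ∀ z ∈ X, ∀ x₁ ∈ Xb, ∀ x₂ ∈ Xb,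
      |ψb s x₁ z - ψb s x₂ z| ≤ κ s * ‖x₁ - x₂‖)
    (γseq εseq : ℕ → ℝ)
    (hγpos : ∀ ν, 0 < γseq ν) (hγanti : Antitone γseq)
    (hγ0 : Tendsto γseq atTop (𝓝 0))
    (hεpos : ∀ ν, 0 < εseq ν) (hεanti : Antitone εseq)
    (hε0 : Tendsto εseq atTop (𝓝 0))
    (xν : ℕ → EuclideanSpace ℝ (Fin n₁)) (hx0 : xν 0 ∈ X)
    (xi : ℕ → ℕ → EuclideanSpace ℝ (Fin n₁))
    (hinit : ∀ ν, xi ν 0 = xν ν)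
    (xs : ℕ → ℕ → Fin S → EuclideanSpace ℝ (Fin n₁))
    (ys : ℕ → ℕ → Fin S → EuclideanSpace ℝ (Fin n₂))
    (cs : ℕ → ℕ → Fin S → EuclideanSpace ℝ (Fin n₁))
    (hxsmem : ∀ ν i s, xs ν i s ∈ Xb)
    (hfeas : ∀ ν i s j, G s (xs ν i s) (ys ν i s) j ≤ 0)
    (hmin : ∀ ν i s, ∀ x ∈ Xb, ∀ y : EuclideanSpace ℝ (Fin n₂), (∀ j, G s x y j ≤ 0) →
      f s (xi ν i) (ys ν i s) + ‖xs ν i s - xi ν i‖ ^ 2 / (2 * γseq ν)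
        ≤ f s (xi ν i) y + ‖x - xi ν i‖ ^ 2 / (2 * γseq ν))
    (hcs : ∀ ν i s, ∀ z' : EuclideanSpace ℝ (Fin n₁),
      -f s z' (ys ν i s) ≥ -f s (xi ν i) (ys ν i s) + ⟪cs ν i s, z' - xi ν i⟫)
    (hmasterX : ∀ ν i, xi ν (i + 1) ∈ X)
    (hmaster : ∀ ν i, ∀ x ∈ X,
      φ (xi ν (i + 1)) + (1 / (S : ℝ)) * ∑ s : Fin S,
        (‖xi ν (i + 1)‖ ^ 2 / (2 * γseq ν)
          - (‖xi ν i‖ ^ 2 / (2 * γseq ν) - penv Xb (f s) (G s) (γseq ν) (xi ν i))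
          - ⟪(1 / γseq ν) • xs ν i s + cs ν i s, xi ν (i + 1) - xi ν i⟫)
      ≤ φ x + (1 / (S : ℝ)) * ∑ s : Fin S,
        (‖x‖ ^ 2 / (2 * γseq ν)
          - (‖xi ν i‖ ^ 2 / (2 * γseq ν) - penv Xb (f s) (G s) (γseq ν) (xi ν i))
          - ⟪(1 / γseq ν) • xs ν i s + cs ν i s, x - xi ν i⟫))
    (iν : ℕ → ℕ)
    (hstop : ∀ ν, ‖xi ν (iν ν + 1) - xi ν (iν ν)‖ ≤ εseq ν * γseq ν)
    (hleast : ∀ ν, ∀ j < iν ν, εseq ν * γseq ν < ‖xi ν (j + 1) - xi ν j‖)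
    (hnext : ∀ ν, xν (ν + 1) = xi ν (iν ν + 1)) :
    ∀ xbar : EuclideanSpace ℝ (Fin n₁),
      (∃ σ : ℕ → ℕ, StrictMono σ ∧ Tendsto (fun k => xν (σ k)) atTop (𝓝 xbar)) →
      ∃ (u w : EuclideanSpace ℝ (Fin n₁)) (a b : Fin S → EuclideanSpace ℝ (Fin n₁)),
        (∀ x' : EuclideanSpace ℝ (Fin n₁), φ x' ≥ φ xbar + ⟪u, x' - xbar⟫) ∧
        (∀ x ∈ X, ⟪w, x - xbar⟫ ≤ 0) ∧
        (∀ s, ∀ x' ∈ Xb, ψb s x' xbar ≥ ψb s xbar xbar + ⟪a s, x' - xbar⟫) ∧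
        (∀ s, ∀ z' ∈ Xb, -ψb s xbar z' ≥ -ψb s xbar xbar + ⟪b s, z' - xbar⟫) ∧
        u + (1 / (S : ℝ)) • (∑ s : Fin S, (a s - b s)) + w = 0 := by
  classical
  intro xbar ⟨σ, hσmono, hσlim⟩
  -- Notation
  set p : ℕ → EuclideanSpace ℝ (Fin n₁) := fun ν => xi ν (iν ν + 1) with hp
  set z : ℕ → EuclideanSpace ℝ (Fin n₁) := fun ν => xi ν (iν ν) with hzdef
  set XS : ℕ → Fin S → EuclideanSpace ℝ (Fin n₁) := fun ν s => xs ν (iν ν) s with hXS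
  set CS : ℕ → Fin S → EuclideanSpace ℝ (Fin n₁) := fun ν s => cs ν (iν ν) s with hCS
  set d : ℕ → Fin S → EuclideanSpace ℝ (Fin n₁) :=
    fun ν s => (γseq ν)⁻¹ • (z ν - XS ν s) with hd
  -- memberships
  have hxXall : ∀ ν, xν ν ∈ X := by
    intro ν
    induction ν with
    | zero => exact hx0
    | succ j _ => rw [hnext]; exact hmasterX j (iν j)
  have hzX : ∀ ν, z ν ∈ X := by
    intro ν
    show xi ν (iν ν) ∈ X
    rcases Nat.eq_zero_or_eq_succ_pred (iν ν) with h | h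
    · rw [h, hinit]; exact hxXall ν
    · rw [h]; exact hmasterX ν _
  have hpX : ∀ ν, p ν ∈ X := fun ν => hmasterX ν (iν ν)
  have hzXb : ∀ ν, z ν ∈ Xb := fun ν => interior_subset (hXint (hzX ν))
  have hpXb : ∀ ν, p ν ∈ Xb := fun ν => interior_subset (hXint (hpX ν))
  have hxsXb : ∀ ν s, XS ν s ∈ Xb := fun ν s => hxsmem ν (iν ν) s
  -- index sequence
  set m : ℕ → ℕ := fun k => σ (k + 1) - 1 with hm
  have hm1 : ∀ k, m k + 1 = σ (k + 1) := by
    intro k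
    have h1 : k + 1 ≤ σ (k + 1) := hσmono.le_apply
    show σ (k + 1) - 1 + 1 = σ (k + 1)
    omega
  have hmk : ∀ k, k ≤ m k := by
    intro k
    have h1 : k + 1 ≤ σ (k + 1) := hσmono.le_apply
    show k ≤ σ (k + 1) - 1
    omega
  have hmtop : Tendsto m atTop atTop :=
    tendsto_atTop_mono hmk tendsto_id
  have hplim : Tendsto (fun k => p (m k)) atTop (𝓝 xbar) := by
    have h1 : Tendsto (fun k => xν (σ (k + 1))) atTop (𝓝 xbar) :=
      hσlim.comp (tendsto_add_atTop_nat 1)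
    refine h1.congr fun k => ?_
    rw [← hm1 k, hnext]
  have hγm : Tendsto (fun k => γseq (m k)) atTop (𝓝 0) := hγ0.comp hmtop
  have hεm : Tendsto (fun k => εseq (m k)) atTop (𝓝 0) := hε0.comp hmtop
  have hεγm : Tendsto (fun k => εseq (m k) * γseq (m k)) atTop (𝓝 0) := by
    have := hεm.mul hγm; simpa using this
  have hzlim : Tendsto (fun k => z (m k)) atTop (𝓝 xbar) := by
    have h1 : Tendsto (fun k => p (m k) - z (m k)) atTop (𝓝 0) := by
      apply squeeze_zero_norm (fun k => hstop (m k)) hεγm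
    have h2 := hplim.sub h1
    simpa using h2
  have hxbarX : xbar ∈ X :=
    hXcomp.isClosed.mem_of_tendsto hplim (Filter.Eventually.of_forall fun k => hpX _)
  have hxbarInt : xbar ∈ interior Xb := hXint hxbarX
  have hxbarXb : xbar ∈ Xb := interior_subset hxbarInt
  -- radius
  obtain ⟨r, hr0, hball⟩ : ∃ r : ℝ, 0 < r ∧ Metric.closedBall xbar r ⊆ Xb := by
    obtain ⟨ε, hε, hb⟩ := Metric.mem_nhds_iff.mp (isOpen_interior.mem_nhds hxbarInt)
    exact ⟨ε / 2, by linarith,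
      (Metric.closedBall_subset_ball (by linarith)).trans (hb.trans interior_subset)⟩
  -- scenario facts
  have hval : ∀ ν s, f s (z ν) (ys ν (iν ν) s) = ψb s (XS ν s) (z ν) := by
    intro ν s
    obtain ⟨y', hy'f, hy'v, hy'm⟩ := hA s (XS ν s) (hxsXb ν s) (z ν) (hzXb ν)
    have h1 : ψb s (XS ν s) (z ν) ≤ f s (z ν) (ys ν (iν ν) s) :=
      hy'm _ (hfeas ν (iν ν) s)
    have h2 := hmin ν (iν ν) s (XS ν s) (hxsXb ν s) y' hy'f
    have h3 : f s (z ν) (ys ν (iν ν) s) ≤ f s (z ν) y' := by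
      have : ‖xs ν (iν ν) s - xi ν (iν ν)‖ ^ 2 / (2 * γseq ν)
          = ‖XS ν s - z ν‖ ^ 2 / (2 * γseq ν) := rfl
      linarith [h2]
    rw [hy'v] at h1 ⊢
    linarith
  have hprox : ∀ ν s, ∀ x' ∈ Xb,
      ψb s (XS ν s) (z ν) + ‖XS ν s - z ν‖ ^ 2 / (2 * γseq ν)
        ≤ ψb s x' (z ν) + ‖x' - z ν‖ ^ 2 / (2 * γseq ν) := by
    intro ν s x' hx'
    obtain ⟨y', hy'f, hy'v, _⟩ := hA s x' hx' (z ν) (hzXb ν)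
    have h2 := hmin ν (iν ν) s x' hx' y' hy'f
    rw [← hval ν s, hy'v]
    exact h2
  have hdist : ∀ ν s, ‖XS ν s - z ν‖ ≤ 2 * κ s * γseq ν := by
    intro ν s
    have h1 := hprox ν s (z ν) (hzXb ν)
    have h2 : ‖z ν - z ν‖ ^ 2 / (2 * γseq ν) = 0 := by simp
    have h3 : ‖XS ν s - z ν‖ ^ 2 / (2 * γseq ν) ≤ ψb s (z ν) (z ν) - ψb s (XS ν s) (z ν) := by
      linarith
    have h4 : ψb s (z ν) (z ν) - ψb s (XS ν s) (z ν) ≤ κ s * ‖z ν - XS ν s‖ := by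
      have := hB s (z ν) (hzX ν) (z ν) (hzXb ν) (XS ν s) (hxsXb ν s)
      calc ψb s (z ν) (z ν) - ψb s (XS ν s) (z ν)
          ≤ |ψb s (z ν) (z ν) - ψb s (XS ν s) (z ν)| := le_abs_self _
        _ ≤ κ s * ‖z ν - XS ν s‖ := this
    rw [norm_sub_rev (z ν)] at h4
    set t : ℝ := ‖XS ν s - z ν‖ with hts
    have ht0 : 0 ≤ t := norm_nonneg _
    have hγ := hγpos ν
    rcases eq_or_lt_of_le ht0 with h | h
    · rw [← h]; have := hκ s; positivity
    · have h5 : t ^ 2 ≤ 2 * γseq ν * (κ s * t) := by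
        rw [div_le_iff₀ (by positivity : (0:ℝ) < 2 * γseq ν)] at h3
        calc t ^ 2 ≤ (ψb s (z ν) (z ν) - ψb s (XS ν s) (z ν)) * (2 * γseq ν) := h3
          _ ≤ κ s * t * (2 * γseq ν) := by
              have := mul_le_mul_of_nonneg_right h4 (by positivity : (0:ℝ) ≤ 2 * γseq ν)
              linarith
          _ = 2 * γseq ν * (κ s * t) := by ring
      nlinarith [h5, h]
  have hdsub : ∀ ν s, ∀ x' ∈ Xb,
      ψb s (XS ν s) (z ν) + ⟪d ν s, x' - XS ν s⟫ ≤ ψb s x' (z ν) := by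
    intro ν s x' hx'
    obtain ⟨y', hy'f, hy'v, _⟩ := hA s x' hx' (z ν) (hzXb ν)
    have hγ := hγpos ν
    refine aux_le_of_small (ψb s x' (z ν)) _ (‖x' - XS ν s‖ ^ 2 / (2 * γseq ν)) ?_
    intro t ht0 ht1
    set xt := XS ν s + t • (x' - XS ν s) with hxt
    set yt := ys ν (iν ν) s + t • (y' - ys ν (iν ν) s) with hyt
    have hxtXb : xt ∈ Xb := by
      have hxteq : xt = (1 - t) • XS ν s + t • x' := by rw [hxt]; module
      rw [hxteq]
      exact hXbconv (hxsXb ν s) hx' (by linarith) ht0.le (by ring)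
    have hytf : ∀ j, G s xt yt j ≤ 0 := by
      intro j
      have hGc := (hG s j).2 (Set.mem_univ (XS ν s, ys ν (iν ν) s)) (Set.mem_univ (x', y'))
        (by linarith : (0:ℝ) ≤ 1 - t) ht0.le (by ring)
      have hps : ((1 - t) • ((XS ν s, ys ν (iν ν) s) :
          EuclideanSpace ℝ (Fin n₁) × EuclideanSpace ℝ (Fin n₂)) + t • (x', y')) = (xt, yt) := by
        rw [Prod.ext_iff]
        constructor
        · show (1 - t) • XS ν s + t • x' = xt
          rw [hxt]; module
        · show (1 - t) • ys ν (iν ν) s + t • y' = yt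
          rw [hyt]; module
      rw [hps] at hGc
      simp only [smul_eq_mul] at hGc
      have h1 := hfeas ν (iν ν) s j
      have h2 := hy'f j
      nlinarith [mul_nonneg (by linarith : (0:ℝ) ≤ 1 - t) (neg_nonneg.mpr h1),
        mul_nonneg ht0.le (neg_nonneg.mpr h2)]
    have hfle : f s (z ν) yt ≤ (1 - t) * f s (z ν) (ys ν (iν ν) s) + t * f s (z ν) y' := by
      have hc := (hfconv s (z ν)).2 (Set.mem_univ (ys ν (iν ν) s)) (Set.mem_univ y')
        (by linarith : (0:ℝ) ≤ 1 - t) ht0.le (by ring)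
      have hyteq : (1 - t) • ys ν (iν ν) s + t • y' = yt := by rw [hyt]; module
      rw [hyteq] at hc
      simpa using hc
    have hminc : f s (z ν) (ys ν (iν ν) s) + ‖XS ν s - z ν‖ ^ 2 / (2 * γseq ν)
        ≤ f s (z ν) yt + ‖xt - z ν‖ ^ 2 / (2 * γseq ν) := hmin ν (iν ν) s xt hxtXb yt hytf
    have hexp : ‖xt - z ν‖ ^ 2 = ‖XS ν s - z ν‖ ^ 2
        + 2 * t * ⟪XS ν s - z ν, x' - XS ν s⟫ + t ^ 2 * ‖x' - XS ν s‖ ^ 2 := by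
      have h1 : xt - z ν = (XS ν s - z ν) + t • (x' - XS ν s) := by rw [hxt]; module
      rw [h1, norm_add_sq_real, real_inner_smul_right, norm_smul]
      rw [Real.norm_eq_abs, abs_of_pos ht0, mul_pow]
      ring
    set A : ℝ := f s (z ν) (ys ν (iν ν) s) with hA'
    set B : ℝ := f s (z ν) y' with hB'
    set I : ℝ := ⟪XS ν s - z ν, x' - XS ν s⟫ with hI'
    set N : ℝ := ‖x' - XS ν s‖ ^ 2 with hN'
    have hdiv : A ≤ B + I / γseq ν + t * (N / (2 * γseq ν)) := by
      have expand : t * (B + I / γseq ν + t * (N / (2 * γseq ν)))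
          = t * B + (2 * t * I + t ^ 2 * N) / (2 * γseq ν) := by
        field_simp; ring
      have h7 : t * A ≤ t * (B + I / γseq ν + t * (N / (2 * γseq ν))) := by
        rw [expand]
        have h8 : (‖XS ν s - z ν‖ ^ 2 + 2 * t * I + t ^ 2 * N) / (2 * γseq ν)
            = ‖XS ν s - z ν‖ ^ 2 / (2 * γseq ν) + (2 * t * I + t ^ 2 * N) / (2 * γseq ν) := by
          ring
        rw [hexp, h8] at hminc
        linarith [hminc, hfle]
      exact le_of_mul_le_mul_left h7 ht0
    have hvalA : ψb s (XS ν s) (z ν) = A := (hval ν s).symm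
    have hvalB : ψb s x' (z ν) = B := hy'v
    have hdinner : ⟪d ν s, x' - XS ν s⟫ = -(I / γseq ν) := by
      have hshow : ⟪(γseq ν)⁻¹ • (z ν - XS ν s), x' - XS ν s⟫ = -(I / γseq ν) := by
        rw [real_inner_smul_left]
        rw [show z ν - XS ν s = -(XS ν s - z ν) by abel, inner_neg_left]
        rw [hI']
        field_simp
      exact hshow
    rw [hvalA, hvalB, hdinner]
    linarith
  have hc5 : ∀ ν s, ∀ z' ∈ Xb,
      ψb s (XS ν s) z' + ⟪CS ν s, z' - z ν⟫ ≤ ψb s (XS ν s) (z ν) := by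
    intro ν s z' hz'
    obtain ⟨_, _, _, hy'm⟩ := hA s (XS ν s) (hxsXb ν s) z' hz'
    have h1 : ψb s (XS ν s) z' ≤ f s z' (ys ν (iν ν) s) := hy'm _ (hfeas ν (iν ν) s)
    have h2 := hcs ν (iν ν) s z'
    have h3 : f s z' (ys ν (iν ν) s) + ⟪cs ν (iν ν) s, z' - xi ν (iν ν)⟫
        ≤ f s (xi ν (iν ν)) (ys ν (iν ν) s) := by linarith [h2]
    have h4 : f s (z ν) (ys ν (iν ν) s) = ψb s (XS ν s) (z ν) := hval ν s
    have h5 : ⟪CS ν s, z' - z ν⟫ = ⟪cs ν (iν ν) s, z' - xi ν (iν ν)⟫ := rfl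
    rw [h5]
    have h6 : f s (xi ν (iν ν)) (ys ν (iν ν) s) = ψb s (XS ν s) (z ν) := h4
    linarith
  -- convexity / concavity of ψb
  have hψconv : ∀ s, ∀ zz ∈ Xb, ConvexOn ℝ Xb (fun x => ψb s x zz) := by
    intro s zz hzz
    refine ⟨hXbconv, ?_⟩
    intro x₁ hx₁ x₂ hx₂ a b ha hb hab
    obtain ⟨y₁, hy₁f, hy₁v, _⟩ := hA s x₁ hx₁ zz hzz
    obtain ⟨y₂, hy₂f, hy₂v, _⟩ := hA s x₂ hx₂ zz hzz
    have hmemc : a • x₁ + b • x₂ ∈ Xb := hXbconv hx₁ hx₂ ha hb hab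
    obtain ⟨yc, hycf, hycv, hycm⟩ := hA s (a • x₁ + b • x₂) hmemc zz hzz
    have hfeasc : ∀ j, G s (a • x₁ + b • x₂) (a • y₁ + b • y₂) j ≤ 0 := by
      intro j
      have hGc := (hG s j).2 (Set.mem_univ (x₁, y₁)) (Set.mem_univ (x₂, y₂)) ha hb hab
      have hps : a • ((x₁, y₁) : EuclideanSpace ℝ (Fin n₁) × EuclideanSpace ℝ (Fin n₂))
          + b • (x₂, y₂) = (a • x₁ + b • x₂, a • y₁ + b • y₂) := by
        simp [Prod.ext_iff]
      rw [hps] at hGc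
      simp only [smul_eq_mul] at hGc
      nlinarith [mul_nonneg ha (neg_nonneg.mpr (hy₁f j)), mul_nonneg hb (neg_nonneg.mpr (hy₂f j))]
    have h1 : ψb s (a • x₁ + b • x₂) zz ≤ f s zz (a • y₁ + b • y₂) := hycm _ hfeasc
    have h2 : f s zz (a • y₁ + b • y₂) ≤ a * f s zz y₁ + b * f s zz y₂ := by
      have := (hfconv s zz).2 (Set.mem_univ y₁) (Set.mem_univ y₂) ha hb hab
      simpa using this
    simp only [smul_eq_mul]
    rw [hy₁v, hy₂v] at *
    linarith
  have hψconc : ∀ s, ∀ x ∈ Xb, ConcaveOn ℝ Xb (fun zz => ψb s x zz) := by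
    intro s x hx
    refine ⟨hXbconv, ?_⟩
    intro z₁ hz₁ z₂ hz₂ a b ha hb hab
    have hmemc : a • z₁ + b • z₂ ∈ Xb := hXbconv hz₁ hz₂ ha hb hab
    obtain ⟨yc, hycf, hycv, _⟩ := hA s x hx (a • z₁ + b • z₂) hmemc
    obtain ⟨_, _, _, h₁m⟩ := hA s x hx z₁ hz₁
    obtain ⟨_, _, _, h₂m⟩ := hA s x hx z₂ hz₂
    have h1 : ψb s x z₁ ≤ f s z₁ yc := h₁m _ hycf
    have h2 : ψb s x z₂ ≤ f s z₂ yc := h₂m _ hycf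
    have h3 : a * f s z₁ yc + b * f s z₂ yc ≤ f s (a • z₁ + b • z₂) yc := by
      have := (hfconc s yc).2 (Set.mem_univ z₁) (Set.mem_univ z₂) ha hb hab
      simpa using this
    simp only [smul_eq_mul]
    rw [hycv]
    nlinarith [mul_le_mul_of_nonneg_left h1 ha, mul_le_mul_of_nonneg_left h2 hb]
  -- continuity
  have hcontz : ∀ s, ∀ x ∈ Xb, ContinuousAt (fun zz => ψb s x zz) xbar := by
    intro s x hx
    have h1 : ConcaveOn ℝ (interior Xb) (fun zz => ψb s x zz) :=
      (hψconc s x hx).subset interior_subset (hXbconv.interior)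
    exact (h1.continuousOn isOpen_interior).continuousAt
      (isOpen_interior.mem_nhds hxbarInt)
  have hcontx : ∀ s, ∀ zz ∈ Xb, ContinuousAt (fun x => ψb s x zz) xbar := by
    intro s zz hzz
    have h1 : ConvexOn ℝ (interior Xb) (fun x => ψb s x zz) :=
      (hψconv s zz hzz).subset interior_subset (hXbconv.interior)
    exact (h1.continuousOn isOpen_interior).continuousAt
      (isOpen_interior.mem_nhds hxbarInt)
  -- local bound for ψb
  obtain ⟨T, hT0, hTbd⟩ : ∃ T : Fin S → ℝ, (∀ s, 0 ≤ T s) ∧ ∀ s,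
      ∀ x ∈ Metric.closedBall xbar (r / (n₁ + 1)),
      ∀ zz ∈ Metric.closedBall xbar (r / (n₁ + 1)), |ψb s x zz| ≤ T s := by
    classical
    set pt : Option (Fin n₁ × Bool) → EuclideanSpace ℝ (Fin n₁) :=
      fun o => o.elim xbar (fun ib =>
        xbar + (if ib.2 then r else -r) • EuclideanSpace.single ib.1 (1:ℝ)) with hpt
    have hptdist : ∀ o, dist (pt o) xbar ≤ r := by
      rintro (_ | ⟨i, bb⟩)
      · simp [hpt]; exact hr0.le
      · show dist (xbar + (if bb then r else -r) • EuclideanSpace.single i (1:ℝ)) xbar ≤ r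
        rw [dist_eq_norm, add_sub_cancel_left, norm_smul, EuclideanSpace.norm_single]
        rcases bb with _ | _ <;> simp [abs_of_pos hr0]
    have hptXb : ∀ o, pt o ∈ Xb := fun o => hball (Metric.mem_closedBall.mpr (hptdist o))
    set T0 : Fin S → ℝ := fun s => Finset.univ.sup'
      (Finset.univ_nonempty (α := Option (Fin n₁ × Bool) × Option (Fin n₁ × Bool)))
      (fun oo => |ψb s (pt oo.1) (pt oo.2)|) with hT0def
    have hptT : ∀ s o₁ o₂, |ψb s (pt o₁) (pt o₂)| ≤ T0 s := by
      intro s o₁ o₂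
      exact Finset.le_sup' (f := fun oo => |ψb s (pt oo.1) (pt oo.2)|)
        (Finset.mem_univ (o₁, o₂))
    have hT00 : ∀ s, 0 ≤ T0 s := fun s => le_trans (abs_nonneg _) (hptT s none none)
    have hBsub : Metric.closedBall xbar (r / (n₁ + 1)) ⊆ Xb := by
      intro q hq
      refine hball (Metric.mem_closedBall.mpr ?_)
      have : (r : ℝ) / (n₁ + 1) ≤ r := by
        rw [div_le_iff₀ (by positivity : (0:ℝ) < (n₁:ℝ) + 1)]
        nlinarith [hr0.le, Nat.cast_nonneg (α := ℝ) n₁]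
      exact le_trans (Metric.mem_closedBall.mp hq) this
    have hmemB : ∀ q : EuclideanSpace ℝ (Fin n₁),
        q ∈ Metric.closedBall xbar (r / (n₁ + 1)) ↔ dist q xbar ≤ r / (n₁ + 1) :=
      fun q => Metric.mem_closedBall
    -- (c1) lower bound in z at cross points
    have hc1 : ∀ s o, ∀ zz ∈ Metric.closedBall xbar (r / (n₁ + 1)),
        -ψb s (pt o) zz ≤ T0 s := by
      intro s o zz hzz
      refine aux_cross_bound (s := Xb) (h := fun zz => -ψb s (pt o) zz)
        ((hψconc s (pt o) (hptXb o)).neg) xbar r (T0 s) hr0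
        (fun q hq => hball (Metric.mem_closedBall.mpr hq)) ?_ ?_ zz
        ((hmemB zz).mp hzz)
      · exact le_trans (neg_le_abs _) (hptT s o none)
      · intro i e he
        have he' : e = r ∨ e = -r := by
          rcases abs_eq hr0.le |>.mp he with h | h
          · exact Or.inl h
          · exact Or.inr h
        rcases he' with h | h
        · rw [h]
          exact le_trans (neg_le_abs _) (hptT s o (some (i, true)))
        · rw [h]
          exact le_trans (neg_le_abs _) (hptT s o (some (i, false)))
    -- (c2) upper bound in z at cross points
    have hc2 : ∀ s o, ∀ zz ∈ Metric.closedBall xbar (r / (n₁ + 1)),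
        ψb s (pt o) zz ≤ 3 * T0 s := by
      intro s o zz hzz
      set zmir := xbar + (xbar - zz) with hzmir
      have hzmB : zmir ∈ Metric.closedBall xbar (r / (n₁ + 1)) := by
        rw [hmemB, hzmir, dist_eq_norm, add_sub_cancel_left, ← dist_eq_norm, dist_comm]
        exact (hmemB zz).mp hzz
      have hcomb := (hψconc s (pt o) (hptXb o)).2 (hBsub hzz) (hBsub hzmB)
        (by norm_num : (0:ℝ) ≤ 1/2) (by norm_num : (0:ℝ) ≤ 1/2) (by norm_num)
      have hmid : (1/2 : ℝ) • zz + (1/2 : ℝ) • zmir = xbar := by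
        rw [hzmir]; module
      rw [hmid] at hcomb
      simp only [smul_eq_mul] at hcomb
      have h1 : ψb s (pt o) xbar ≤ T0 s :=
        le_trans (le_abs_self _) (hptT s o none)
      have h2 : -ψb s (pt o) zmir ≤ T0 s := hc1 s o zmir hzmB
      nlinarith [hcomb]
    -- (c3) upper bound for both in small ball
    have hc3 : ∀ s, ∀ x ∈ Metric.closedBall xbar (r / (n₁ + 1)),
        ∀ zz ∈ Metric.closedBall xbar (r / (n₁ + 1)), ψb s x zz ≤ 3 * T0 s := by
      intro s x hx zz hzz
      refine aux_cross_bound (s := Xb) (h := fun x => ψb s x zz)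
        (hψconv s zz (hBsub hzz)) xbar r (3 * T0 s) hr0
        (fun q hq => hball (Metric.mem_closedBall.mpr hq)) ?_ ?_ x ((hmemB x).mp hx)
      · exact hc2 s none zz hzz
      · intro i e he
        have he' : e = r ∨ e = -r := by
          rcases abs_eq hr0.le |>.mp he with h | h
          · exact Or.inl h
          · exact Or.inr h
        rcases he' with h | h
        · rw [h]; exact hc2 s (some (i, true)) zz hzz
        · rw [h]; exact hc2 s (some (i, false)) zz hzz
    -- (c4) lower bound for both
    have hc4 : ∀ s, ∀ x ∈ Metric.closedBall xbar (r / (n₁ + 1)),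
        ∀ zz ∈ Metric.closedBall xbar (r / (n₁ + 1)), -(5 * T0 s) ≤ ψb s x zz := by
      intro s x hx zz hzz
      set xmir := xbar + (xbar - x) with hxmir
      have hxmB : xmir ∈ Metric.closedBall xbar (r / (n₁ + 1)) := by
        rw [hmemB, hxmir, dist_eq_norm, add_sub_cancel_left, ← dist_eq_norm, dist_comm]
        exact (hmemB x).mp hx
      have hcomb := (hψconv s zz (hBsub hzz)).2 (hBsub hx) (hBsub hxmB)
        (by norm_num : (0:ℝ) ≤ 1/2) (by norm_num : (0:ℝ) ≤ 1/2) (by norm_num)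
      have hmid : (1/2 : ℝ) • x + (1/2 : ℝ) • xmir = xbar := by
        rw [hxmir]; module
      rw [hmid] at hcomb
      simp only [smul_eq_mul] at hcomb
      have h1 : -ψb s xbar zz ≤ T0 s := hc1 s none zz hzz
      have h2 : ψb s xmir zz ≤ 3 * T0 s := hc3 s xmir hxmB zz hzz
      nlinarith [hcomb]
    refine ⟨fun s => 5 * T0 s, fun s => by have := hT00 s; positivity, ?_⟩
    intro s x hx zz hzz
    show |ψb s x zz| ≤ 5 * T0 s
    rw [abs_le]
    constructor
    · exact hc4 s x hx zz hzz
    · have := hc3 s x hx zz hzz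
      have := hT00 s
      linarith
  -- c bound
  set ρ₁ : ℝ := r / (n₁ + 1) / 2 with hρ₁
  have hρ₁pos : 0 < ρ₁ := by positivity
  have hcbd : ∀ ν s, dist (z ν) xbar ≤ ρ₁ → dist (XS ν s) xbar ≤ ρ₁ →
      ‖CS ν s‖ ≤ 10 * T s / ρ₁ + 1 := by
    intro ν s hz hXSd
    by_cases hC0 : CS ν s = 0
    · rw [hC0, norm_zero]
      have := hT0 s
      positivity
    · have hCn : (0:ℝ) < ‖CS ν s‖ := norm_pos_iff.mpr hC0
      set z' := z ν + (ρ₁ * ‖CS ν s‖⁻¹) • CS ν s with hz'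
      have hz'd : dist z' xbar ≤ r / (n₁ + 1) := by
        have h1 : dist z' (z ν) = ρ₁ := by
          rw [hz', dist_eq_norm, add_sub_cancel_left, norm_smul, Real.norm_eq_abs,
            abs_of_pos (by positivity : (0:ℝ) < ρ₁ * ‖CS ν s‖⁻¹)]
          field_simp
        calc dist z' xbar ≤ dist z' (z ν) + dist (z ν) xbar := dist_triangle _ _ _
          _ ≤ ρ₁ + ρ₁ := by rw [h1]; linarith
          _ = r / (n₁ + 1) := by rw [hρ₁]; ring
      have hz'Xb : z' ∈ Xb := by
        refine hball (Metric.mem_closedBall.mpr (le_trans hz'd ?_))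
        rw [div_le_iff₀ (by positivity : (0:ℝ) < (n₁:ℝ) + 1)]
        nlinarith [hr0.le, Nat.cast_nonneg (α := ℝ) n₁]
      have h5 := hc5 ν s z' hz'Xb
      have hinn : ⟪CS ν s, z' - z ν⟫ = ρ₁ * ‖CS ν s‖ := by
        rw [hz', add_sub_cancel_left, real_inner_smul_right, real_inner_self_eq_norm_sq]
        field_simp
      have hρle : ρ₁ ≤ r / (n₁ + 1) := by
        rw [hρ₁]
        have : (0:ℝ) < r / (n₁ + 1) := by positivity
        linarith
      have hzB : z ν ∈ Metric.closedBall xbar (r / (n₁ + 1)) :=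
        Metric.mem_closedBall.mpr (le_trans hz hρle)
      have hXSB : XS ν s ∈ Metric.closedBall xbar (r / (n₁ + 1)) :=
        Metric.mem_closedBall.mpr (le_trans hXSd hρle)
      have hz'B : z' ∈ Metric.closedBall xbar (r / (n₁ + 1)) :=
        Metric.mem_closedBall.mpr hz'd
      have hb1 := hTbd s (XS ν s) hXSB (z ν) hzB
      have hb2 := hTbd s (XS ν s) hXSB z' hz'B
      rw [hinn] at h5
      have habs1 : ψb s (XS ν s) (z ν) ≤ T s := le_trans (le_abs_self _) hb1
      have habs2 : -ψb s (XS ν s) z' ≤ T s := le_trans (neg_le_abs _) hb2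
      have hkey : ρ₁ * ‖CS ν s‖ ≤ 2 * T s := by linarith
      rw [← le_div_iff₀' hρ₁pos] at hkey
      calc ‖CS ν s‖ ≤ 2 * T s / ρ₁ := hkey
        _ ≤ 10 * T s / ρ₁ + 1 := by
            have hTs := hT0 s
            have h8 : 2 * T s / ρ₁ ≤ 10 * T s / ρ₁ := by
              gcongr
              linarith
            linarith [h8]
  -- limits of XS
  have hXSlim : ∀ s, Tendsto (fun k => XS (m k) s) atTop (𝓝 xbar) := by
    intro s
    have h1 : Tendsto (fun k => z (m k) - XS (m k) s) atTop (𝓝 0) := by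
      have hbnd : ∀ k, ‖z (m k) - XS (m k) s‖ ≤ 2 * κ s * γseq (m k) := by
        intro k; rw [norm_sub_rev]; exact hdist (m k) s
      have hlim0 : Tendsto (fun k => 2 * κ s * γseq (m k)) atTop (𝓝 0) := by
        have := hγm.const_mul (2 * κ s); simpa using this
      exact squeeze_zero_norm hbnd hlim0
    have h2 := hzlim.sub h1
    simpa using h2
  -- eventual closeness
  have hev : ∀ᶠ k in atTop, dist (z (m k)) xbar ≤ ρ₁ ∧
      ∀ s, dist (XS (m k) s) xbar ≤ ρ₁ := by
    have h1 : ∀ᶠ k in atTop, dist (z (m k)) xbar ≤ ρ₁ := by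
      have := hzlim (Metric.closedBall_mem_nhds xbar hρ₁pos)
      simpa [Metric.mem_closedBall] using this
    have h2 : ∀ᶠ k in atTop, ∀ s, dist (XS (m k) s) xbar ≤ ρ₁ := by
      rw [eventually_all]
      intro s
      have := (hXSlim s) (Metric.closedBall_mem_nhds xbar hρ₁pos)
      simpa [Metric.mem_closedBall] using this
    exact h1.and h2
  -- modified c sequence
  set Cb : Fin S → ℝ := fun s => 10 * T s / ρ₁ + 1 with hCb
  have hCb0 : ∀ s, 0 ≤ Cb s := by
    intro s; have := hT0 s; rw [hCb]; positivity
  set C' : ℕ → Fin S → EuclideanSpace ℝ (Fin n₁) :=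
    fun k s => if ‖CS (m k) s‖ ≤ Cb s then CS (m k) s else 0 with hC'
  have hC'bd : ∀ k s, ‖C' k s‖ ≤ Cb s := by
    intro k s
    show ‖if ‖CS (m k) s‖ ≤ Cb s then CS (m k) s else 0‖ ≤ Cb s
    split_ifs with h
    · exact h
    · simpa using hCb0 s
  have hC'ev : ∀ᶠ k in atTop, ∀ s, C' k s = CS (m k) s := by
    filter_upwards [hev] with k hk
    intro s
    show (if ‖CS (m k) s‖ ≤ Cb s then CS (m k) s else 0) = CS (m k) s
    rw [if_pos (hcbd (m k) s hk.1 (hk.2 s))]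
  have hdbd : ∀ ν s, ‖d ν s‖ ≤ 2 * κ s := by
    intro ν s
    show ‖(γseq ν)⁻¹ • (z ν - XS ν s)‖ ≤ 2 * κ s
    rw [norm_smul, norm_inv, Real.norm_eq_abs, abs_of_pos (hγpos ν), norm_sub_rev]
    rw [inv_mul_le_iff₀ (hγpos ν)]
    calc ‖XS ν s - z ν‖ ≤ 2 * κ s * γseq ν := hdist ν s
      _ = γseq ν * (2 * κ s) := by ring
  -- extraction
  set R : ℝ := 1 + ∑ s : Fin S, (2 * κ s + Cb s) with hR
  have hRs : ∀ s, 2 * κ s ≤ R ∧ Cb s ≤ R := by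
    intro s
    have hterm : ∀ s' : Fin S, (0:ℝ) ≤ 2 * κ s' + Cb s' := by
      intro s'; have := hκ s'; have := hCb0 s'; linarith
    have hle : 2 * κ s + Cb s ≤ ∑ s' : Fin S, (2 * κ s' + Cb s') :=
      Finset.single_le_sum (fun s' _ => hterm s') (Finset.mem_univ s)
    have := hCb0 s
    have := hκ s
    constructor <;> (rw [hR]; linarith)
  set W : ℕ → (Fin S → EuclideanSpace ℝ (Fin n₁)) × (Fin S → EuclideanSpace ℝ (Fin n₁)) :=
    fun k => (fun s => d (m k) s, fun s => C' k s) with hW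
  have hWbd : ∀ k, W k ∈ Metric.closedBall
      (0 : (Fin S → EuclideanSpace ℝ (Fin n₁)) × (Fin S → EuclideanSpace ℝ (Fin n₁))) R := by
    intro k
    have hR0 : (0:ℝ) ≤ R := by
      have h := (hRs ⟨0, hS⟩).1
      have h2 := hκ (⟨0, hS⟩ : Fin S)
      linarith
    rw [Metric.mem_closedBall, dist_zero_right]
    have h1 : ‖(W k).1‖ ≤ R := by
      rw [pi_norm_le_iff_of_nonneg hR0]
      intro s
      exact le_trans (hdbd (m k) s) (hRs s).1
    have h2 : ‖(W k).2‖ ≤ R := by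
      rw [pi_norm_le_iff_of_nonneg hR0]
      intro s
      exact le_trans (hC'bd k s) (hRs s).2
    calc ‖W k‖ = max ‖(W k).1‖ ‖(W k).2‖ := rfl
      _ ≤ R := max_le h1 h2
  obtain ⟨ab, _, τ, hτmono, hWτ⟩ :=
    tendsto_subseq_of_bounded Metric.isBounded_closedBall hWbd
  have hτtop : Tendsto τ atTop atTop := hτmono.tendsto_atTop
  have hdlim : ∀ s, Tendsto (fun k => d (m (τ k)) s) atTop (𝓝 (ab.1 s)) := by
    intro s
    have hcont : Continuous fun q :
        (Fin S → EuclideanSpace ℝ (Fin n₁)) × (Fin S → EuclideanSpace ℝ (Fin n₁)) =>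
        q.1 s := (continuous_apply s).comp continuous_fst
    exact (hcont.tendsto ab).comp hWτ
  have hclim : ∀ s, Tendsto (fun k => C' (τ k) s) atTop (𝓝 (ab.2 s)) := by
    intro s
    have hcont : Continuous fun q :
        (Fin S → EuclideanSpace ℝ (Fin n₁)) × (Fin S → EuclideanSpace ℝ (Fin n₁)) =>
        q.2 s := (continuous_apply s).comp continuous_snd
    exact (hcont.tendsto ab).comp hWτ
  have hCSlim : ∀ s, Tendsto (fun k => CS (m (τ k)) s) atTop (𝓝 (ab.2 s)) := by
    intro s
    refine (hclim s).congr' ?_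
    filter_upwards [hτtop.eventually hC'ev] with k hk
    exact hk s
  -- limits composed with τ
  have hplimτ : Tendsto (fun k => p (m (τ k))) atTop (𝓝 xbar) := hplim.comp hτtop
  have hzlimτ : Tendsto (fun k => z (m (τ k))) atTop (𝓝 xbar) := hzlim.comp hτtop
  have hXSlimτ : ∀ s, Tendsto (fun k => XS (m (τ k)) s) atTop (𝓝 xbar) :=
    fun s => (hXSlim s).comp hτtop
  have hγτ : Tendsto (fun k => γseq (m (τ k))) atTop (𝓝 0) := hγm.comp hτtop
  have hετ : Tendsto (fun k => εseq (m (τ k))) atTop (𝓝 0) := hεm.comp hτtop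
  -- mid value limit
  have hXSnormlim : ∀ s, Tendsto (fun k => ‖XS (m (τ k)) s - xbar‖) atTop (𝓝 0) := by
    intro s
    have h := (hXSlimτ s).sub (tendsto_const_nhds (x := xbar))
    rw [sub_self] at h
    have h2 := h.norm
    rwa [norm_zero] at h2
  have hmidlim : ∀ s, Tendsto (fun k => ψb s (XS (m (τ k)) s) (z (m (τ k)))) atTop
      (𝓝 (ψb s xbar xbar)) := by
    intro s
    have h1 : Tendsto (fun k => ψb s xbar (z (m (τ k)))) atTop (𝓝 (ψb s xbar xbar)) :=
      ((hcontz s xbar hxbarXb).tendsto).comp hzlimτ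
    have hκlim : Tendsto (fun k => κ s * ‖XS (m (τ k)) s - xbar‖) atTop (𝓝 0) := by
      have := (hXSnormlim s).const_mul (κ s); simpa using this
    have h2 : Tendsto (fun k => ψb s (XS (m (τ k)) s) (z (m (τ k)))
        - ψb s xbar (z (m (τ k)))) atTop (𝓝 0) := by
      refine squeeze_zero_norm (fun k => ?_) hκlim
      rw [Real.norm_eq_abs]
      exact hB s (z (m (τ k))) (hzX _) (XS (m (τ k)) s) (hxsXb _ s) xbar hxbarXb
    have h3 := h2.add h1
    simpa using h3
  -- the subgradient property of a
  have hfinal_a : ∀ s, ∀ x' ∈ Xb, ψb s x' xbar ≥ ψb s xbar xbar + ⟪ab.1 s, x' - xbar⟫ := by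
    intro s x' hx'
    have hineq : ∀ k, ψb s (XS (m (τ k)) s) (z (m (τ k)))
        + ⟪d (m (τ k)) s, x' - XS (m (τ k)) s⟫ ≤ ψb s x' (z (m (τ k))) :=
      fun k => hdsub (m (τ k)) s x' hx'
    have hlimL : Tendsto (fun k => ψb s (XS (m (τ k)) s) (z (m (τ k)))
        + ⟪d (m (τ k)) s, x' - XS (m (τ k)) s⟫) atTop
        (𝓝 (ψb s xbar xbar + ⟪ab.1 s, x' - xbar⟫)) :=
      (hmidlim s).add ((hdlim s).inner (tendsto_const_nhds.sub (hXSlimτ s)))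
    have hlimR : Tendsto (fun k => ψb s x' (z (m (τ k)))) atTop (𝓝 (ψb s x' xbar)) :=
      ((hcontz s x' hx').tendsto).comp hzlimτ
    exact le_of_tendsto_of_tendsto' hlimL hlimR hineq
  have hfinal_b : ∀ s, ∀ z' ∈ Xb, -ψb s xbar z' ≥ -ψb s xbar xbar + ⟪ab.2 s, z' - xbar⟫ := by
    intro s z' hz'
    have hineq : ∀ k, ψb s (XS (m (τ k)) s) z' + ⟪CS (m (τ k)) s, z' - z (m (τ k))⟫
        ≤ ψb s (XS (m (τ k)) s) (z (m (τ k))) := fun k => hc5 (m (τ k)) s z' hz'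
    have hlimL : Tendsto (fun k => ψb s (XS (m (τ k)) s) z'
        + ⟪CS (m (τ k)) s, z' - z (m (τ k))⟫) atTop
        (𝓝 (ψb s xbar z' + ⟪ab.2 s, z' - xbar⟫)) :=
      (((hcontx s z' hz').tendsto).comp (hXSlimτ s)).add
        ((hCSlim s).inner (tendsto_const_nhds.sub hzlimτ))
    have hkey := le_of_tendsto_of_tendsto' hlimL (hmidlim s) hineq
    linarith
  -- master first order condition
  have hgν : ∀ ν, ∀ x ∈ X, φ (p ν) + ⟪(1 / (S:ℝ)) • ∑ s : Fin S,
      ((γseq ν)⁻¹ • (XS ν s - p ν) + CS ν s), x - p ν⟫ ≤ φ x := by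
    intro ν x hx
    have hγ := hγpos ν
    have hS' : (0:ℝ) < (S:ℝ) := by exact_mod_cast hS
    refine aux_le_of_small (φ x) _ (‖x - p ν‖ ^ 2 / (2 * γseq ν)) ?_
    intro t ht0 ht1
    set xt := p ν + t • (x - p ν) with hxt
    have hxteq : xt = (1 - t) • p ν + t • x := by rw [hxt]; module
    have hxtX : xt ∈ X := by
      rw [hxteq]; exact hXconv (hpX ν) hx (by linarith) ht0.le (by ring)
    have hm2 : φ (p ν) + (1 / (S:ℝ)) * ∑ s : Fin S,
        (‖p ν‖ ^ 2 / (2 * γseq ν)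
          - (‖z ν‖ ^ 2 / (2 * γseq ν) - penv Xb (f s) (G s) (γseq ν) (z ν))
          - ⟪(1 / γseq ν) • XS ν s + CS ν s, p ν - z ν⟫)
        ≤ φ xt + (1 / (S:ℝ)) * ∑ s : Fin S,
        (‖xt‖ ^ 2 / (2 * γseq ν)
          - (‖z ν‖ ^ 2 / (2 * γseq ν) - penv Xb (f s) (G s) (γseq ν) (z ν))
          - ⟪(1 / γseq ν) • XS ν s + CS ν s, xt - z ν⟫) := hmaster ν (iν ν) xt hxtX
    have hφt : φ xt ≤ (1 - t) * φ (p ν) + t * φ x := by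
      have hc := hφ.2 (Set.mem_univ (p ν)) (Set.mem_univ x)
        (by linarith : (0:ℝ) ≤ 1 - t) ht0.le (by ring)
      rw [← hxteq] at hc
      simpa using hc
    set Lsum : ℝ := ∑ s : Fin S,
        (‖p ν‖ ^ 2 / (2 * γseq ν)
          - (‖z ν‖ ^ 2 / (2 * γseq ν) - penv Xb (f s) (G s) (γseq ν) (z ν))
          - ⟪(1 / γseq ν) • XS ν s + CS ν s, p ν - z ν⟫) with hLsum
    set Rsum : ℝ := ∑ s : Fin S,
        (‖xt‖ ^ 2 / (2 * γseq ν)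
          - (‖z ν‖ ^ 2 / (2 * γseq ν) - penv Xb (f s) (G s) (γseq ν) (z ν))
          - ⟪(1 / γseq ν) • XS ν s + CS ν s, xt - z ν⟫) with hRsum
    set Sig1 : ℝ := ∑ s : Fin S,
        (⟪p ν, x - p ν⟫ / γseq ν - ⟪(1 / γseq ν) • XS ν s + CS ν s, x - p ν⟫) with hSig1
    set c : ℝ := ‖x - p ν‖ ^ 2 / (2 * γseq ν) with hc'
    have hnormxt : ‖xt‖ ^ 2 = ‖p ν‖ ^ 2 + 2 * t * ⟪p ν, x - p ν⟫ + t ^ 2 * ‖x - p ν‖ ^ 2 := by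
      rw [hxt, norm_add_sq_real, real_inner_smul_right, norm_smul,
        Real.norm_eq_abs, abs_of_pos ht0, mul_pow]
      ring
    have hsumdiff : Rsum - Lsum = t * Sig1 + (S:ℝ) * (t ^ 2 * c) := by
      have h0 : Rsum - Lsum = ∑ s : Fin S,
          (t * (⟪p ν, x - p ν⟫ / γseq ν - ⟪(1 / γseq ν) • XS ν s + CS ν s, x - p ν⟫)
            + t ^ 2 * c) := by
        rw [hRsum, hLsum, ← Finset.sum_sub_distrib]
        refine Finset.sum_congr rfl fun s _ => ?_
        have hin1 : ⟪(1 / γseq ν) • XS ν s + CS ν s, xt - z ν⟫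
            - ⟪(1 / γseq ν) • XS ν s + CS ν s, p ν - z ν⟫
            = ⟪(1 / γseq ν) • XS ν s + CS ν s, xt - p ν⟫ := by
          rw [← inner_sub_right]
          congr 1
          abel
        have hin2 : ⟪(1 / γseq ν) • XS ν s + CS ν s, xt - p ν⟫
            = t * ⟪(1 / γseq ν) • XS ν s + CS ν s, x - p ν⟫ := by
          rw [show xt - p ν = t • (x - p ν) by rw [hxt]; abel, real_inner_smul_right]
        have expand : ‖xt‖ ^ 2 / (2 * γseq ν) - ‖p ν‖ ^ 2 / (2 * γseq ν)
            = t * (⟪p ν, x - p ν⟫ / γseq ν) + t ^ 2 * c := by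
          rw [hnormxt, hc']
          field_simp
          ring
        calc ‖xt‖ ^ 2 / (2 * γseq ν)
              - (‖z ν‖ ^ 2 / (2 * γseq ν) - penv Xb (f s) (G s) (γseq ν) (z ν))
              - ⟪(1 / γseq ν) • XS ν s + CS ν s, xt - z ν⟫
            - (‖p ν‖ ^ 2 / (2 * γseq ν)
              - (‖z ν‖ ^ 2 / (2 * γseq ν) - penv Xb (f s) (G s) (γseq ν) (z ν))
              - ⟪(1 / γseq ν) • XS ν s + CS ν s, p ν - z ν⟫)
            = ‖xt‖ ^ 2 / (2 * γseq ν) - ‖p ν‖ ^ 2 / (2 * γseq ν)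
              - (⟪(1 / γseq ν) • XS ν s + CS ν s, xt - z ν⟫
                - ⟪(1 / γseq ν) • XS ν s + CS ν s, p ν - z ν⟫) := by ring
          _ = t * (⟪p ν, x - p ν⟫ / γseq ν) + t ^ 2 * c
              - t * ⟪(1 / γseq ν) • XS ν s + CS ν s, x - p ν⟫ := by
              rw [hin1, hin2, expand]
          _ = t * (⟪p ν, x - p ν⟫ / γseq ν - ⟪(1 / γseq ν) • XS ν s + CS ν s, x - p ν⟫)
              + t ^ 2 * c := by ring
      rw [h0, Finset.sum_add_distrib, ← Finset.mul_sum, Finset.sum_const, Finset.card_univ,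
        Fintype.card_fin, nsmul_eq_mul, hSig1]
    have hinnereq : ⟪(1 / (S:ℝ)) • ∑ s : Fin S,
        ((γseq ν)⁻¹ • (XS ν s - p ν) + CS ν s), x - p ν⟫ = -((1 / (S:ℝ)) * Sig1) := by
      rw [real_inner_smul_left, sum_inner, hSig1, ← mul_neg, ← Finset.sum_neg_distrib]
      congr 1
      refine Finset.sum_congr rfl fun s _ => ?_
      rw [inner_add_left, real_inner_smul_left, inner_sub_left]
      rw [show (⟪(1 / γseq ν) • XS ν s + CS ν s, x - p ν⟫ : ℝ)
        = (1 / γseq ν) * ⟪XS ν s, x - p ν⟫ + ⟪CS ν s, x - p ν⟫ by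
          rw [inner_add_left, real_inner_smul_left]]
      field_simp
      ring
    rw [hinnereq]
    have hstep : t * (φ (p ν) - φ x) ≤ t * ((1 / (S:ℝ)) * Sig1 + t * c) := by
      have h1 : φ (p ν) - φ xt ≤ (1 / (S:ℝ)) * Rsum - (1 / (S:ℝ)) * Lsum := by linarith
      have h2 : (1 / (S:ℝ)) * Rsum - (1 / (S:ℝ)) * Lsum = (1 / (S:ℝ)) * (Rsum - Lsum) := by
        ring
      have h3 : (1 / (S:ℝ)) * (t * Sig1 + (S:ℝ) * (t ^ 2 * c)) = t * ((1 / (S:ℝ)) * Sig1 + t * c) := by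
        field_simp
      have h4 : t * (φ (p ν) - φ x) ≤ φ (p ν) - φ xt := by nlinarith [hφt]
      rw [h2, hsumdiff, h3] at h1
      linarith
    have hstep2 : φ (p ν) - φ x ≤ (1 / (S:ℝ)) * Sig1 + t * c := le_of_mul_le_mul_left hstep ht0
    linarith
  set g : EuclideanSpace ℝ (Fin n₁) := (1 / (S:ℝ)) • ∑ s : Fin S, (ab.2 s - ab.1 s) with hg
  have hglim : Tendsto (fun k => (1 / (S:ℝ)) • ∑ s : Fin S,
      ((γseq (m (τ k)))⁻¹ • (XS (m (τ k)) s - p (m (τ k))) + CS (m (τ k)) s)) atTop (𝓝 g) := by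
    have hterm : ∀ s : Fin S, Tendsto (fun k =>
        (γseq (m (τ k)))⁻¹ • (XS (m (τ k)) s - p (m (τ k))) + CS (m (τ k)) s) atTop
        (𝓝 (ab.2 s - ab.1 s)) := by
      intro s
      have hsplit : ∀ k, (γseq (m (τ k)))⁻¹ • (XS (m (τ k)) s - p (m (τ k))) + CS (m (τ k)) s
          = (-(d (m (τ k)) s) + (γseq (m (τ k)))⁻¹ • (z (m (τ k)) - p (m (τ k))))
            + CS (m (τ k)) s := by
        intro k
        congr 1
        show (γseq (m (τ k)))⁻¹ • (XS (m (τ k)) s - p (m (τ k)))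
          = -((γseq (m (τ k)))⁻¹ • (z (m (τ k)) - XS (m (τ k)) s))
            + (γseq (m (τ k)))⁻¹ • (z (m (τ k)) - p (m (τ k)))
        rw [← smul_neg, ← smul_add]
        congr 1
        abel
      have he : Tendsto (fun k => (γseq (m (τ k)))⁻¹ • (z (m (τ k)) - p (m (τ k)))) atTop
          (𝓝 0) := by
        refine squeeze_zero_norm (fun k => ?_) hετ
        rw [norm_smul, norm_inv, Real.norm_eq_abs, abs_of_pos (hγpos _), norm_sub_rev]
        rw [inv_mul_le_iff₀ (hγpos _)]
        calc ‖p (m (τ k)) - z (m (τ k))‖ ≤ εseq (m (τ k)) * γseq (m (τ k)) := hstop _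
          _ = γseq (m (τ k)) * εseq (m (τ k)) := by ring
      have hcomb := (((hdlim s).neg).add he).add (hCSlim s)
      have hcomb2 : Tendsto (fun k =>
          (-(d (m (τ k)) s) + (γseq (m (τ k)))⁻¹ • (z (m (τ k)) - p (m (τ k))))
            + CS (m (τ k)) s) atTop (𝓝 (ab.2 s - ab.1 s)) := by
        have heq : -(ab.1 s) + 0 + ab.2 s = ab.2 s - ab.1 s := by abel
        rw [← heq]
        exact hcomb
      exact hcomb2.congr (fun k => (hsplit k).symm)
    have hsum := tendsto_finset_sum (Finset.univ : Finset (Fin S)) (fun s _ => hterm s)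
    have := hsum.const_smul (1 / (S:ℝ))
    rw [hg]
    exact this
  have hsub : ∀ x ∈ X, φ xbar + ⟪g, x - xbar⟫ ≤ φ x := by
    intro x hx
    have hφc : Continuous φ := continuousOn_univ.mp (hφ.continuousOn isOpen_univ)
    have hlim1 : Tendsto (fun k => φ (p (m (τ k))) + ⟪(1 / (S:ℝ)) • ∑ s : Fin S,
        ((γseq (m (τ k)))⁻¹ • (XS (m (τ k)) s - p (m (τ k))) + CS (m (τ k)) s), x - p (m (τ k))⟫)
        atTop (𝓝 (φ xbar + ⟪g, x - xbar⟫)) :=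
      (((hφc.tendsto xbar).comp hplimτ).add
        (hglim.inner (tendsto_const_nhds.sub hplimτ)))
    exact le_of_tendsto_of_tendsto' hlim1 (tendsto_const_nhds (x := φ x))
      (fun k => hgν (m (τ k)) x hx)
  obtain ⟨u, w, hu, hw, huw⟩ := aux_subgrad_split φ hφ X hXconv xbar hxbarX g hsub
  refine ⟨u, w, ab.1, ab.2, fun x' => hu x', hw, hfinal_a, hfinal_b, ?_⟩
  have hsumneg : ∑ s : Fin S, (ab.1 s - ab.2 s) = -∑ s : Fin S, (ab.2 s - ab.1 s) := by
    rw [← Finset.sum_neg_distrib]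
    exact Finset.sum_congr rfl fun s _ => by abel
  rw [hsumneg, smul_neg]
  rw [hg] at huw
  rw [← huw]
  abel
end
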